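/- arXiv:1611.05372 — 5 statements merged into one kernel-verified Lean document; each statement's English description precedes it below -/
import Mathlib

section
/- (Sensitivity to a unit parameter increase) Let f : 2^E → ℕ be an integral polymatroid rank function, let every C_e : ℕ×ℕ → ℝ≥0 be regular, let t ∈ ℕ^E, d ∈ ℕ, and let x be optimal for P(t,d). Fix e* ∈ E and set t' = t + χ_{e*}. If D_{e*}(x) = ∅ then x is optimal for P(t',d). Otherwise let g* ∈ D_{e*}(x) minimize C_g⁺(x_g;t_g) over g ∈ D_{e*}(x) and set y = x − χ_{e*} + χ_{g*}; then whichever of x and y has the smaller value of Σ_{e∈E} C_e(·_e;t'_e) is an optimal solution of P(t',d). -/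
/-!
Everything rests on the simultaneous exchange property of integral polymatroid bases: if
`z e < x e` for bases `x, z`, some `g ≠ e` with `x g < z g` has both `x + χ_g - χ_e` and
`z + χ_e - χ_g` in the base polytope. Such a `g` lies outside the largest `x`-tight set avoiding
`e` and inside the smallest `z`-tight set containing `e`; submodularity forces one to exist.

Raising `t_e` by one adds `C_e(w_e; t_e + 1) - C_e(w_e; t_e)` to the cost of `w`, which by
regularity is monotone in `w_e`, so no base `z` with `z e ≥ x e` beats `x`. A base with
`z e < x e` is moved towards `x` by exchanges `z + χ_e - χ_h` that do not increase the new cost,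
until `z e + 1 = x e`; there `y` is at least as cheap as `z` by the choice of `g*`.
-/

open Finset

/-- Indicator vector of an element. -/
def chi {E : Type*} [DecidableEq E] (e : E) : E → ℕ := fun e' => if e' = e then 1 else 0

/-- Integral polymatroid rank function: normalized, monotone, submodular. -/
def IsPolymatroidRank {E : Type*} [Fintype E] [DecidableEq E] (f : Finset E → ℕ) : Prop :=
  f ∅ = 0 ∧ (∀ U V : Finset E, U ⊆ V → f U ≤ f V) ∧
    (∀ U V : Finset E, f (U ∪ V) + f (U ∩ V) ≤ f U + f V)

/-- The integral polymatroid base polytope `B_f(d)`. -/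
def Base {E : Type*} [Fintype E] (f : Finset E → ℕ) (d : ℕ) : Set (E → ℕ) :=
  {x | (∀ U : Finset E, ∑ e ∈ U, x e ≤ f U) ∧ ∑ e, x e = d}

/-- Regularity of a parametrized cost function: the left discrete derivative
`C⁻(x;t) = C(x;t) - C(x-1;t)` (for `x ≥ 1`) satisfies both
`C⁻(x;t) ≤ C⁻(x;t+1)` and `C⁻(x;t+1) ≤ C⁻(x+1;t)`. -/
def Regular (C : ℕ → ℕ → ℝ) : Prop :=
  ∀ x t : ℕ, 1 ≤ x →
    C x t - C (x - 1) t ≤ C x (t + 1) - C (x - 1) (t + 1) ∧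
    C x (t + 1) - C (x - 1) (t + 1) ≤ C (x + 1) t - C x t

/-- The objective `Σ_{e ∈ E} C_e(x_e; t_e)` of problem `P(t,d)`. -/
def totalCost {E : Type*} [Fintype E] (C : E → ℕ → ℕ → ℝ) (t : E → ℕ) (x : E → ℕ) : ℝ :=
  ∑ e, C e (x e) (t e)

/-- An optimal solution of `P(t,d)`: minimize `Σ_e C_e(x_e;t_e)` over `B_f(d)`. -/
def IsOptimal {E : Type*} [Fintype E] (f : Finset E → ℕ) (C : E → ℕ → ℕ → ℝ)
    (t : E → ℕ) (d : ℕ) (x : E → ℕ) : Prop :=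
  x ∈ Base f d ∧ ∀ y ∈ Base f d, totalCost C t x ≤ totalCost C t y

/-- The `L1`-distance `‖u - v‖ = Σ_e |u_e - v_e|` of two vectors in `ℕ^E`. -/
def l1 {E : Type*} [Fintype E] (u v : E → ℕ) : ℕ :=
  ∑ e, ((u e : ℤ) - (v e : ℤ)).natAbs

section

variable {E : Type*} [DecidableEq E]

lemma sum_chi (e : E) (U : Finset E) : ∑ a ∈ U, chi e a = if e ∈ U then 1 else 0 :=
  sum_ite_eq' U e fun _ => 1

lemma sub_chi_add_chi_eq (x : E → ℕ) {e g : E} (h : g ≠ e) :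
    x - chi e + chi g = x + chi g - chi e := by
  funext a
  simp only [Pi.add_apply, Pi.sub_apply, chi]
  split_ifs <;> subst_vars <;> simp_all

lemma sum_add_chi_sub_chi (x : E → ℕ) {a b : E} (hab : a ≠ b) (hb : 1 ≤ x b) (U : Finset E) :
    ∑ c ∈ U, (x + chi a - chi b) c + (if b ∈ U then 1 else 0) =
      ∑ c ∈ U, x c + (if a ∈ U then 1 else 0) := by
  rw [← sum_chi, ← sum_chi, ← sum_add_distrib, ← sum_add_distrib]
  refine sum_congr rfl fun c _ => ?_
  simp only [Pi.add_apply, Pi.sub_apply, chi]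
  split_ifs <;> subst_vars <;> omega

section Exchange

variable {f : Finset E → ℕ} {d : ℕ} {x z : E → ℕ}

def IsTight (f : Finset E → ℕ) (x : E → ℕ) (U : Finset E) : Prop :=
  ∑ a ∈ U, x a = f U

lemma IsTight.union_inter (hsub : ∀ U V : Finset E, f (U ∪ V) + f (U ∩ V) ≤ f U + f V)
    (hx : ∀ U : Finset E, ∑ a ∈ U, x a ≤ f U) {U V : Finset E}
    (hU : IsTight f x U) (hV : IsTight f x V) :
    IsTight f x (U ∪ V) ∧ IsTight f x (U ∩ V) := by
  have := sum_union_inter (s₁ := U) (s₂ := V) (f := x)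
  have := hx (U ∪ V)
  have := hx (U ∩ V)
  have := hsub U V
  unfold IsTight at *
  omega

variable [Fintype E]

lemma add_chi_sub_chi_mem_base (hx : x ∈ Base f d) {a b : E} (hab : a ≠ b) (hb : 1 ≤ x b)
    (h : ∀ U, a ∈ U → b ∉ U → ¬ IsTight f x U) : x + chi a - chi b ∈ Base f d := by
  refine ⟨fun U => ?_, ?_⟩
  · have hsum := sum_add_chi_sub_chi x hab hb U
    have hU := hx.1 U
    by_cases haU : a ∈ U <;> by_cases hbU : b ∈ U <;>
      simp only [haU, hbU, if_true, if_false] at hsum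
    · omega
    · have := h U haU hbU
      unfold IsTight at this
      omega
    · omega
    · omega
  · have hsum := sum_add_chi_sub_chi x hab hb univ
    simp only [mem_univ, if_true] at hsum
    linarith [hx.2]

lemma exists_maximal_tight_not_mem (hf : IsPolymatroidRank f) (hx : x ∈ Base f d) (e : E) :
    ∃ A, IsTight f x A ∧ e ∉ A ∧ ∀ U, IsTight f x U → e ∉ U → U ⊆ A := by
  classical
  let F := univ.filter fun U => IsTight f x U ∧ e ∉ U
  have hA : IsTight f x (F.sup id) ∧ e ∉ F.sup id :=
    sup_induction (p := fun W => IsTight f x W ∧ e ∉ W)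
      ⟨by simp [IsTight, hf.1], notMem_empty e⟩
      (fun U hU V hV => ⟨(hU.1.union_inter hf.2.2 hx.1 hV.1).1, by simp [hU.2, hV.2]⟩)
      (fun U hU => (mem_filter.1 hU).2)
  exact ⟨_, hA.1, hA.2, fun U hU heU => le_sup (f := id) (mem_filter.2 ⟨mem_univ _, hU, heU⟩)⟩

lemma exists_minimal_tight_mem (hf : IsPolymatroidRank f) (hz : z ∈ Base f d) (e : E) :
    ∃ S, (IsTight f z S ∨ S = univ) ∧ e ∈ S ∧ ∀ U, IsTight f z U → e ∈ U → S ⊆ U := by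
  classical
  let F := univ.filter fun U => IsTight f z U ∧ e ∈ U
  have hS : (IsTight f z (F.inf id) ∨ F.inf id = univ) ∧ e ∈ F.inf id :=
    inf_induction (p := fun W => (IsTight f z W ∨ W = univ) ∧ e ∈ W)
      ⟨Or.inr rfl, mem_univ e⟩
      (fun U hU V hV => by
        refine ⟨?_, mem_inter.2 ⟨hU.2, hV.2⟩⟩
        rcases hU.1 with hU' | rfl <;> rcases hV.1 with hV' | rfl
        · exact Or.inl (hU'.union_inter hf.2.2 hz.1 hV').2
        · simpa using Or.inl hU'
        · simpa using Or.inl hV'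
        · simp)
      (fun U hU => ⟨Or.inl (mem_filter.1 hU).2.1, (mem_filter.1 hU).2.2⟩)
  exact ⟨_, hS.1, hS.2, fun U hU heU => inf_le (f := id) (mem_filter.2 ⟨mem_univ _, hU, heU⟩)⟩

lemma sum_sdiff_le_of_isTight (hf : IsPolymatroidRank f) (hx : x ∈ Base f d)
    (hz : z ∈ Base f d) {A S : Finset E} (hA : IsTight f x A) (hS : IsTight f z S ∨ S = univ) :
    ∑ a ∈ S \ A, x a ≤ ∑ a ∈ S \ A, z a := by
  rcases hS with hS | rfl
  · have hz_split := sum_inter_add_sum_sdiff S A z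
    have hx_split : ∑ a ∈ A, x a + ∑ a ∈ S \ A, x a = ∑ a ∈ S ∪ A, x a := by
      rw [← sum_union disjoint_sdiff, union_sdiff_self_eq_union, union_comm]
    have := hz.1 (S ∩ A)
    have := hx.1 (S ∪ A)
    have := hf.2.2 S A
    unfold IsTight at hA hS
    omega
  · have hz_split := sum_add_sum_compl A z
    have hx_split := sum_add_sum_compl A x
    have := hz.1 A
    rw [← compl_eq_univ_sdiff]
    unfold IsTight at hA
    linarith [hx.2, hz.2]

theorem exists_base_exchange (hf : IsPolymatroidRank f) (hx : x ∈ Base f d)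
    (hz : z ∈ Base f d) {e : E} (hlt : z e < x e) :
    ∃ g, g ≠ e ∧ x g < z g ∧ x + chi g - chi e ∈ Base f d ∧ z + chi e - chi g ∈ Base f d := by
  obtain ⟨A, hA, heA, hA_max⟩ := exists_maximal_tight_not_mem hf hx e
  obtain ⟨S, hS, heS, hS_min⟩ := exists_minimal_tight_mem hf hz e
  have heSA : e ∈ S \ A := mem_sdiff.2 ⟨heS, heA⟩
  obtain ⟨g, hg, hxg⟩ : ∃ g ∈ (S \ A).erase e, x g < z g := by
    apply exists_lt_of_sum_lt
    have := sum_sdiff_le_of_isTight hf hx hz hA hS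
    rw [← add_sum_erase _ _ heSA, ← add_sum_erase _ _ heSA] at this
    omega
  obtain ⟨hge, hgS, hgA⟩ : g ≠ e ∧ g ∈ S ∧ g ∉ A := by simpa using hg
  refine ⟨g, hge, hxg, ?_, ?_⟩
  · exact add_chi_sub_chi_mem_base hx hge (by omega)
      fun U hgU heU hU => hgA (hA_max U hU heU hgU)
  · exact add_chi_sub_chi_mem_base hz hge.symm (by omega)
      fun U heU hgU hU => hgU (hS_min U hU heU hgS)

end Exchange

namespace Regular

variable {C : ℕ → ℕ → ℝ} (hC : Regular C)
include hC

lemma monotone_sub_succ_param (s : ℕ) : Monotone fun n => C n (s + 1) - C n s := by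
  refine monotone_nat_of_le_succ fun n => ?_
  have := (hC (n + 1) s n.succ_pos).1
  simp only [Nat.add_sub_cancel] at this
  linarith

lemma sub_succ_param_le (s n : ℕ) :
    C (n + 1) (s + 1) - C n (s + 1) ≤ C (n + 2) s - C (n + 1) s :=
  (hC (n + 1) s n.succ_pos).2

lemma monotone_increment (s : ℕ) : Monotone fun n => C (n + 1) s - C n s := by
  refine monotone_nat_of_le_succ fun n => ?_
  have := (hC (n + 1) s n.succ_pos).1
  simp only [Nat.add_sub_cancel] at this
  linarith [hC.sub_succ_param_le s n]

lemma increment_le_sub_pred (s : ℕ) {m n : ℕ} (hmn : m < n) :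
    C (m + 1) s - C m s ≤ C n s - C (n - 1) s := by
  simpa [Nat.sub_add_cancel (show 1 ≤ n by omega)] using
    hC.monotone_increment s (show m ≤ n - 1 by omega)

end Regular

section Cost

variable [Fintype E]

lemma totalCost_add_chi (C : E → ℕ → ℕ → ℝ) (t w : E → ℕ) (e : E) :
    totalCost C (t + chi e) w = totalCost C t w + (C e (w e) (t e + 1) - C e (w e) (t e)) := by
  rw [← sub_eq_iff_eq_add', totalCost, totalCost, ← sum_sub_distrib,
    Fintype.sum_eq_single e fun a ha => by simp [chi, ha]]
  simp [chi]

lemma totalCost_add_chi_sub_chi (C : E → ℕ → ℕ → ℝ) (t w : E → ℕ) {a b : E} (hab : a ≠ b) :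
    totalCost C t (w + chi a - chi b) = totalCost C t w + (C a (w a + 1) (t a) - C a (w a) (t a))
      - (C b (w b) (t b) - C b (w b - 1) (t b)) := by
  have : totalCost C t (w + chi a - chi b) - totalCost C t w =
      (C a (w a + 1) (t a) - C a (w a) (t a)) + (C b (w b - 1) (t b) - C b (w b) (t b)) := by
    rw [totalCost, totalCost, ← sum_sub_distrib,
      Fintype.sum_eq_add a b hab fun c hc => by simp [chi, hc.1, hc.2]]
    simp [chi, hab, hab.symm]
  linarith

end Cost

namespace IsOptimal

variable [Fintype E] {f : Finset E → ℕ} {C : E → ℕ → ℕ → ℝ} {t : E → ℕ} {d : ℕ} {x z : E → ℕ}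

lemma totalCost_add_chi_le (hreg : ∀ e, Regular (C e)) (hx : IsOptimal f C t d x)
    (hz : z ∈ Base f d) {e : E} (hle : x e ≤ z e) :
    totalCost C (t + chi e) x ≤ totalCost C (t + chi e) z := by
  rw [totalCost_add_chi, totalCost_add_chi]
  exact add_le_add (hx.2 z hz) ((hreg e).monotone_sub_succ_param (t e) hle)

lemma sub_pred_le_increment (hx : IsOptimal f C t d x) {e g : E} (hge : g ≠ e)
    (hg : x + chi g - chi e ∈ Base f d) :
    C e (x e) (t e) - C e (x e - 1) (t e) ≤ C g (x g + 1) (t g) - C g (x g) (t g) := by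
  have := hx.2 _ hg
  rw [totalCost_add_chi_sub_chi C t x hge] at this
  linarith

lemma totalCost_add_chi_sub_chi_le (hreg : ∀ e, Regular (C e)) (hx : IsOptimal f C t d x)
    {e h : E} (hhe : h ≠ e) (hxh : x h < z h) (hxh_mem : x + chi h - chi e ∈ Base f d)
    (hze : z e + 1 < x e) :
    totalCost C (t + chi e) (z + chi e - chi h) ≤ totalCost C (t + chi e) z := by
  -- The cost changes by `C_e⁻(z_e+1; t_e+1) - C_h⁻(z_h; t_h)`, and
  -- `C_e⁻(z_e+1; t_e+1) ≤ C_e⁻(z_e+2; t_e) ≤ C_e⁻(x_e; t_e) ≤ C_h⁺(x_h; t_h) ≤ C_h⁻(z_h; t_h)`.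
  have hz'_shift := totalCost_add_chi C t (z + chi e - chi h) e
  have hz'e : (z + chi e - chi h) e = z e + 1 := by simp [chi, hhe.symm]
  rw [hz'e] at hz'_shift
  have := totalCost_add_chi C t z e
  have := totalCost_add_chi_sub_chi C t z hhe.symm
  have := (hreg e).sub_succ_param_le (t e) (z e)
  have := (hreg e).increment_le_sub_pred (t e) hze
  have := hx.sub_pred_le_increment hhe hxh_mem
  have := (hreg h).increment_le_sub_pred (t h) hxh
  linarith

lemma totalCost_add_chi_sub_chi_le_of_succ_eq (hreg : ∀ e, Regular (C e))
    (hx : IsOptimal f C t d x) {e g h : E} (hge : g ≠ e)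
    (hg_min : C g (x g + 1) (t g) - C g (x g) (t g) ≤ C h (x h + 1) (t h) - C h (x h) (t h))
    (hhe : h ≠ e) (hxh : x h < z h) (hzh_mem : z + chi e - chi h ∈ Base f d)
    (hze : z e + 1 = x e) :
    totalCost C (t + chi e) (x + chi g - chi e) ≤ totalCost C (t + chi e) z := by
  -- `y_e = z_e`, so it suffices to compare old costs, with `x` optimal against `z + χ_e - χ_h`.
  have hy_shift := totalCost_add_chi C t (x + chi g - chi e) e
  have hy_e : (x + chi g - chi e) e = z e := by simp [chi, hge.symm]; omega
  rw [hy_e] at hy_shift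
  have hy_cost := totalCost_add_chi_sub_chi C t x hge
  rw [← hze, Nat.add_sub_cancel] at hy_cost
  have := totalCost_add_chi C t z e
  have := totalCost_add_chi_sub_chi C t z hhe.symm
  have := hx.2 _ hzh_mem
  have := (hreg h).increment_le_sub_pred (t h) hxh
  linarith

theorem min_totalCost_le (hf : IsPolymatroidRank f) (hreg : ∀ e, Regular (C e))
    (hx : IsOptimal f C t d x) {e g : E} (hge : g ≠ e)
    (hg_min : ∀ h, h ≠ e → x + chi h - chi e ∈ Base f d →
      C g (x g + 1) (t g) - C g (x g) (t g) ≤ C h (x h + 1) (t h) - C h (x h) (t h))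
    (z : E → ℕ) (hz : z ∈ Base f d) :
    min (totalCost C (t + chi e) x) (totalCost C (t + chi e) (x + chi g - chi e)) ≤
      totalCost C (t + chi e) z := by
  by_cases hle : x e ≤ z e
  · exact (min_le_left _ _).trans (hx.totalCost_add_chi_le hreg hz hle)
  obtain ⟨h, hhe, hxh, hxh_mem, hzh_mem⟩ := exists_base_exchange hf hx.1 hz (not_le.1 hle)
  rcases (show z e + 1 = x e ∨ z e + 1 < x e by omega) with hze | hze
  · exact (min_le_right _ _).trans (hx.totalCost_add_chi_sub_chi_le_of_succ_eq hreg hge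
      (hg_min h hhe hxh_mem) hhe hxh hzh_mem hze)
  · have hz'e : (z + chi e - chi h) e = z e + 1 := by simp [chi, hhe.symm]
    exact (hx.min_totalCost_le hf hreg hge hg_min _ hzh_mem).trans
      (hx.totalCost_add_chi_sub_chi_le hreg hhe hxh hxh_mem hze)
termination_by x e - z e
decreasing_by omega

end IsOptimal

end

theorem sensitivity_unit_parameter_increase_general {E : Type*} [Fintype E] [DecidableEq E]
    (f : Finset E → ℕ) (hf : IsPolymatroidRank f)
    (C : E → ℕ → ℕ → ℝ)
    (hreg : ∀ e, Regular (C e))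
    (t : E → ℕ) (d : ℕ) (x : E → ℕ)
    (hx : IsOptimal f C t d x)
    (estar : E) (t' : E → ℕ) (ht' : t' = t + chi estar) :
    (({g : E | g ≠ estar ∧ x + chi g - chi estar ∈ Base f d} = ∅) →
        IsOptimal f C t' d x) ∧
    (∀ gstar ∈ {g : E | g ≠ estar ∧ x + chi g - chi estar ∈ Base f d},
      (∀ g ∈ {g : E | g ≠ estar ∧ x + chi g - chi estar ∈ Base f d},
          C gstar (x gstar + 1) (t gstar) - C gstar (x gstar) (t gstar) ≤
            C g (x g + 1) (t g) - C g (x g) (t g)) →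
      (totalCost C t' x ≤ totalCost C t' (x - chi estar + chi gstar) →
          IsOptimal f C t' d x) ∧
      (totalCost C t' (x - chi estar + chi gstar) ≤ totalCost C t' x →
          IsOptimal f C t' d (x - chi estar + chi gstar))) := by
  subst ht'
  refine ⟨fun hD => ⟨hx.1, fun z hz => hx.totalCost_add_chi_le hreg hz ?_⟩, ?_⟩
  · by_contra! hlt
    obtain ⟨g, hge, -, hg, -⟩ := exists_base_exchange hf hx.1 hz hlt
    exact hD.subset ⟨hge, hg⟩
  rintro g ⟨hge, hg⟩ hg_min
  have key := hx.min_totalCost_le hf hreg hge fun h hhe hh => hg_min h ⟨hhe, hh⟩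
  rw [sub_chi_add_chi_eq x hge]
  exact ⟨fun hle => ⟨hx.1, fun z hz => min_eq_left hle ▸ key z hz⟩,
    fun hle => ⟨hg, fun z hz => min_eq_right hle ▸ key z hz⟩⟩

/-- **Sensitivity to a unit parameter increase.** Let `f` be an integral polymatroid rank
function, all `C_e` nonnegative and regular, `x` optimal for `P(t,d)`, `e* ∈ E`, and
`t' = t + χ_{e*}`. If `D_{e*}(x) = ∅` then `x` is optimal for `P(t',d)`. Otherwise, for any
`g* ∈ D_{e*}(x)` minimizing `C_g⁺(x_g;t_g)` over `D_{e*}(x)` and `y = x - χ_{e*} + χ_{g*}`,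
whichever of `x` and `y` has the smaller objective value w.r.t. `t'` is optimal for `P(t',d)`. -/
theorem sensitivity_unit_parameter_increase {E : Type*} [Fintype E] [DecidableEq E] [Nonempty E]
    (f : Finset E → ℕ) (hf : IsPolymatroidRank f)
    (C : E → ℕ → ℕ → ℝ) (hC0 : ∀ e x t, 0 ≤ C e x t)
    (hreg : ∀ e, Regular (C e))
    (t : E → ℕ) (d : ℕ) (x : E → ℕ)
    (hx : IsOptimal f C t d x)
    (estar : E) (t' : E → ℕ) (ht' : t' = t + chi estar) :
    (({g : E | g ≠ estar ∧ x + chi g - chi estar ∈ Base f d} = ∅) →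
        IsOptimal f C t' d x) ∧
    (∀ gstar ∈ {g : E | g ≠ estar ∧ x + chi g - chi estar ∈ Base f d},
      (∀ g ∈ {g : E | g ≠ estar ∧ x + chi g - chi estar ∈ Base f d},
          C gstar (x gstar + 1) (t gstar) - C gstar (x gstar) (t gstar) ≤
            C g (x g + 1) (t g) - C g (x g) (t g)) →
      (totalCost C t' x ≤ totalCost C t' (x - chi estar + chi gstar) →
          IsOptimal f C t' d x) ∧
      (totalCost C t' (x - chi estar + chi gstar) ≤ totalCost C t' x →
          IsOptimal f C t' d (x - chi estar + chi gstar))) :=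
  sensitivity_unit_parameter_increase_general f hf C hreg t d x hx estar t' ht'
end

section
/- Let f : 2^E → ℕ be an integral polymatroid rank function, let every C_e : ℕ×ℕ → ℝ≥0 be regular, and let d ∈ ℕ. For every optimal solution x of P(t,d) and every t' ∈ ℕ^E with ‖t − t'‖ = 1, there exists an optimal solution x' of P(t',d) with ‖x − x'‖ ≤ 2. -/
open Finset

section Aux

variable {E : Type*} [Fintype E] [DecidableEq E]

/-- Move one unit from coordinate `a` to coordinate `b`. -/
def move (z : E → ℕ) (a b : E) : E → ℕ :=
  fun c => if c = b then z c + 1 else if c = a then z c - 1 else z c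

lemma sum_move_int {z : E → ℕ} {a b : E} (hab : a ≠ b) (_ha : 1 ≤ z a) (U : Finset E) :
    (∑ u ∈ U, (move z a b u : ℤ)) =
      ∑ u ∈ U, (z u : ℤ) + (if b ∈ U then 1 else 0) - (if a ∈ U then 1 else 0) := by
  have key : ∀ u, (move z a b u : ℤ) =
      (z u : ℤ) + (if u = b then 1 else 0) - (if u = a then 1 else 0) := by
    intro u
    rcases eq_or_ne u b with rfl | h1
    · simp [move, hab.symm]
    · rcases eq_or_ne u a with rfl | h2
      · simp [move, h1]
        all_goals omega
      · simp [move, h1, h2]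
  simp only [key, Finset.sum_sub_distrib, Finset.sum_add_distrib, Finset.sum_ite_eq' U,
    Finset.sum_const, smul_eq_mul, mul_one]

lemma l1_move {x z : E → ℕ} {a b : E} (hab : a ≠ b) (ha : x a < z a) (hb : z b < x b) :
    l1 x (move z a b) + 2 = l1 x z := by
  have key : ∀ u, ((x u : ℤ) - (z u : ℤ)).natAbs =
      ((x u : ℤ) - (move z a b u : ℤ)).natAbs
        + (if u = b then 1 else 0) + (if u = a then 1 else 0) := by
    intro u
    rcases eq_or_ne u b with rfl | h1
    · simp [move, Ne.symm hab]
      all_goals omega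
    · rcases eq_or_ne u a with rfl | h2
      · simp [move, h1]
        all_goals omega
      · simp [move, h1, h2]
  unfold l1
  simp only [key, Finset.sum_add_distrib, Finset.sum_ite_eq' Finset.univ,
    Finset.mem_univ, if_pos]

lemma cost_move (C : E → ℕ → ℕ → ℝ) (s z : E → ℕ) {a b : E} (hab : a ≠ b) :
    totalCost C s (move z a b) =
      totalCost C s z + (C b (z b + 1) (s b) - C b (z b) (s b))
        - (C a (z a) (s a) - C a (z a - 1) (s a)) := by
  have key : ∀ u, C u (move z a b u) (s u) =
      C u (z u) (s u) + (if u = b then C b (z b + 1) (s b) - C b (z b) (s b) else 0)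
        - (if u = a then C a (z a) (s a) - C a (z a - 1) (s a) else 0) := by
    intro u
    rcases eq_or_ne u b with rfl | h1
    · simp [move, Ne.symm hab]
      all_goals ring
    · rcases eq_or_ne u a with rfl | h2
      · simp [move, h1]
        all_goals ring
      · simp [move, h1, h2]
  unfold totalCost
  simp only [key, Finset.sum_sub_distrib, Finset.sum_add_distrib, Finset.sum_ite_eq' Finset.univ,
    Finset.mem_univ, if_pos]

lemma regular_convex {C : ℕ → ℕ → ℝ} (h : Regular C) (s : ℕ) {u v : ℕ} (hu : 1 ≤ u)
    (huv : u ≤ v) : C u s - C (u - 1) s ≤ C v s - C (v - 1) s := by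
  induction v, huv using Nat.le_induction with
  | base => exact le_refl _
  | succ n hn ih =>
      refine ih.trans ?_
      have h1 := (h n s (by omega)).1
      have h2 := (h n s (by omega)).2
      have hn1 : n + 1 - 1 = n := by omega
      rw [hn1]
      linarith

end Aux

section Exchange

variable {E : Type*} [Fintype E] [DecidableEq E]

lemma tight_union {f : Finset E → ℕ} (hf : IsPolymatroidRank f) {y : E → ℕ}
    (hfeas : ∀ U : Finset E, ∑ u ∈ U, y u ≤ f U) {U V : Finset E}
    (hU : ∑ u ∈ U, y u = f U) (hV : ∑ u ∈ V, y u = f V) :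
    ∑ u ∈ U ∪ V, y u = f (U ∪ V) := by
  have h1 := hfeas (U ∪ V)
  have h2 := hfeas (U ∩ V)
  have h3 := hf.2.2 U V
  have h4 : ∑ u ∈ U ∪ V, y u + ∑ u ∈ U ∩ V, y u = ∑ u ∈ U, y u + ∑ u ∈ V, y u :=
    Finset.sum_union_inter
  omega

lemma tight_inter {f : Finset E → ℕ} (hf : IsPolymatroidRank f) {y : E → ℕ}
    (hfeas : ∀ U : Finset E, ∑ u ∈ U, y u ≤ f U) {U V : Finset E}
    (hU : ∑ u ∈ U, y u = f U) (hV : ∑ u ∈ V, y u = f V) :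
    ∑ u ∈ U ∩ V, y u = f (U ∩ V) := by
  have h1 := hfeas (U ∪ V)
  have h2 := hfeas (U ∩ V)
  have h3 := hf.2.2 U V
  have h4 : ∑ u ∈ U ∪ V, y u + ∑ u ∈ U ∩ V, y u = ∑ u ∈ U, y u + ∑ u ∈ V, y u :=
    Finset.sum_union_inter
  omega

lemma exchange {f : Finset E → ℕ} (hf : IsPolymatroidRank f) {d : ℕ} {x y : E → ℕ}
    (hx : x ∈ Base f d) (hy : y ∈ Base f d) {e : E} (he : x e < y e) :
    ∃ e', e' ≠ e ∧ y e' < x e' ∧ move y e e' ∈ Base f d ∧ move x e' e ∈ Base f d := by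
  obtain ⟨hxf, hxd⟩ := hx
  obtain ⟨hyf, hyd⟩ := hy
  classical
  set 𝒟 : Finset (Finset E) :=
    Finset.univ.filter (fun U : Finset E => e ∉ U ∧ ∑ u ∈ U, y u = f U) with h𝒟
  set D : Finset E := 𝒟.sup id with hDdef
  have hD : e ∉ D ∧ ∑ u ∈ D, y u = f D := by
    rw [hDdef]
    refine Finset.sup_induction (p := fun S : Finset E => e ∉ S ∧ ∑ u ∈ S, y u = f S)
      ⟨Finset.notMem_empty e, by simpa using hf.1.symm⟩ ?_ ?_
    · rintro U ⟨hU1, hU2⟩ V ⟨hV1, hV2⟩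
      refine ⟨?_, tight_union hf hyf hU2 hV2⟩
      simp only [Finset.sup_eq_union, Finset.mem_union]
      tauto
    · intro U hU
      exact (Finset.mem_filter.mp hU).2
  have hDmax : ∀ U : Finset E, e ∉ U → ∑ u ∈ U, y u = f U → U ⊆ D := by
    intro U h1 h2
    have hmem : U ∈ 𝒟 := by
      rw [h𝒟, Finset.mem_filter]
      exact ⟨Finset.mem_univ U, h1, h2⟩
    have hle : id U ≤ 𝒟.sup id := Finset.le_sup hmem
    simpa [hDdef] using hle
  set 𝒜 : Finset (Finset E) :=
    Finset.univ.filter (fun U : Finset E => e ∈ U ∧ ∑ u ∈ U, x u = f U) with h𝒜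
  set A : Finset E := 𝒜.inf id with hAdef
  have hA : e ∈ A ∧ (∑ u ∈ A, x u = f A ∨ A = Finset.univ) := by
    rw [hAdef]
    refine Finset.inf_induction
      (p := fun S : Finset E => e ∈ S ∧ (∑ u ∈ S, x u = f S ∨ S = Finset.univ))
      ⟨Finset.mem_univ e, Or.inr rfl⟩ ?_ ?_
    · rintro U ⟨hU1, hU2⟩ V ⟨hV1, hV2⟩
      constructor
      · simp only [Finset.inf_eq_inter, Finset.mem_inter]
        exact ⟨hU1, hV1⟩
      · rcases hU2 with hU2 | rfl
        · rcases hV2 with hV2 | rfl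
          · exact Or.inl (tight_inter hf hxf hU2 hV2)
          · simp only [Finset.inf_eq_inter, Finset.inter_univ]
            exact Or.inl hU2
        · rcases hV2 with hV2 | rfl
          · simp only [Finset.inf_eq_inter, Finset.univ_inter]
            exact Or.inl hV2
          · simp
    · intro U hU
      have h2 := (Finset.mem_filter.mp hU).2
      exact ⟨h2.1, Or.inl h2.2⟩
  have hAmin : ∀ U : Finset E, e ∈ U → ∑ u ∈ U, x u = f U → A ⊆ U := by
    intro U h1 h2
    have hmem : U ∈ 𝒜 := by
      rw [h𝒜, Finset.mem_filter]
      exact ⟨Finset.mem_univ U, h1, h2⟩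
    have hle : 𝒜.inf id ≤ id U := Finset.inf_le hmem
    simpa [hAdef] using hle
  -- the counting inequality
  have hcount : ∑ u ∈ A \ D, y u ≤ ∑ u ∈ A \ D, x u := by
    have s2' : ∑ u ∈ (A ∪ D) \ D, y u + ∑ u ∈ D, y u = ∑ u ∈ A ∪ D, y u :=
      Finset.sum_sdiff Finset.subset_union_right
    rw [Finset.union_sdiff_self] at s2'
    rcases hA.2 with htight | huniv
    · have s1' : ∑ u ∈ A \ (A ∩ D), x u + ∑ u ∈ A ∩ D, x u = ∑ u ∈ A, x u :=
        Finset.sum_sdiff Finset.inter_subset_left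
      rw [Finset.sdiff_inter_self_left] at s1'
      have s3 := hf.2.2 A D
      have s4 := hxf (A ∩ D)
      have s5 := hyf (A ∪ D)
      have s6 := hD.2
      omega
    · rw [huniv] at s2' ⊢
      rw [Finset.union_eq_left.mpr (Finset.subset_univ D)] at s2'
      have s1 : ∑ u ∈ Finset.univ \ D, x u + ∑ u ∈ D, x u = ∑ u ∈ Finset.univ, x u :=
        Finset.sum_sdiff (Finset.subset_univ D)
      have s2 : ∑ u ∈ Finset.univ \ D, y u + ∑ u ∈ D, y u = ∑ u ∈ Finset.univ, y u :=
        Finset.sum_sdiff (Finset.subset_univ D)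
      have s4 := hxf D
      have s6 := hD.2
      omega
  have heAD : e ∈ A \ D := Finset.mem_sdiff.mpr ⟨hA.1, hD.1⟩
  -- selection of e'
  obtain ⟨e', he'AD, he'ne, he'lt⟩ : ∃ e', e' ∈ A \ D ∧ e' ≠ e ∧ y e' < x e' := by
    by_contra hcon
    push_neg at hcon
    have hle : ∀ u ∈ A \ D, x u ≤ y u := by
      intro u hu
      rcases eq_or_ne u e with rfl | hne
      · omega
      · have := hcon u hu hne
        omega
    have : ∑ u ∈ A \ D, x u < ∑ u ∈ A \ D, y u :=
      Finset.sum_lt_sum hle ⟨e, heAD, he⟩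
    omega
  obtain ⟨he'A, he'D⟩ := Finset.mem_sdiff.mp he'AD
  have hye : 1 ≤ y e := by omega
  have hxe' : 1 ≤ x e' := by omega
  have hee' : e ≠ e' := he'ne.symm
  have cast_sum : ∀ (z : E → ℕ) (U : Finset E), ((∑ u ∈ U, z u : ℕ) : ℤ) = ∑ u ∈ U, (z u : ℤ) :=
    fun z U => by push_cast; rfl
  refine ⟨e', he'ne, he'lt, ⟨?_, ?_⟩, ⟨?_, ?_⟩⟩
  · -- feasibility of move y e e'
    intro U
    have hint := sum_move_int hee' hye U
    rw [← cast_sum, ← cast_sum] at hint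
    by_cases hU1 : e' ∈ U <;> by_cases hU2 : e ∈ U
    · have := hyf U
      simp only [if_pos hU1, if_pos hU2] at hint
      omega
    · -- critical case : e' ∈ U, e ∉ U
      have hflt : ∑ u ∈ U, y u < f U := by
        rcases lt_or_eq_of_le (hyf U) with h | h
        · exact h
        · exact absurd ((hDmax U hU2 h) hU1) he'D
      simp only [if_pos hU1, if_neg hU2] at hint
      omega
    · have := hyf U
      simp only [if_neg hU1, if_pos hU2] at hint
      omega
    · have := hyf U
      simp only [if_neg hU1, if_neg hU2] at hint
      omega
  · -- sum of move y e e'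
    have hint := sum_move_int hee' hye Finset.univ
    rw [← cast_sum, ← cast_sum] at hint
    simp only [Finset.mem_univ, if_pos] at hint
    omega
  · -- feasibility of move x e' e
    intro U
    have hint := sum_move_int he'ne hxe' U
    rw [← cast_sum, ← cast_sum] at hint
    by_cases hU1 : e ∈ U <;> by_cases hU2 : e' ∈ U
    · have := hxf U
      simp only [if_pos hU1, if_pos hU2] at hint
      omega
    · -- critical case : e ∈ U, e' ∉ U
      have hflt : ∑ u ∈ U, x u < f U := by
        rcases lt_or_eq_of_le (hxf U) with h | h
        · exact h
        · exact absurd ((hAmin U hU1 h) he'A) hU2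
      simp only [if_pos hU1, if_neg hU2] at hint
      omega
    · have := hxf U
      simp only [if_neg hU1, if_pos hU2] at hint
      omega
    · have := hxf U
      simp only [if_neg hU1, if_neg hU2] at hint
      omega
  · have hint := sum_move_int he'ne hxe' Finset.univ
    rw [← cast_sum, ← cast_sum] at hint
    simp only [Finset.mem_univ, if_pos] at hint
    omega

end Exchange

section Min

variable {E : Type*} [Fintype E] [DecidableEq E]

lemma base_finite (f : Finset E → ℕ) (d : ℕ) : (Base f d).Finite := by
  apply Set.Finite.subset (Set.finite_Icc (fun _ : E => (0 : ℕ)) (fun _ => d))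
  rintro z ⟨_, hzd⟩
  rw [Set.mem_Icc]
  refine ⟨fun e => Nat.zero_le _, fun e => ?_⟩
  calc z e ≤ ∑ u, z u := Finset.single_le_sum (fun u _ => Nat.zero_le (z u)) (Finset.mem_univ e)
    _ = d := hzd

lemma exists_opt_min (f : Finset E → ℕ) (C : E → ℕ → ℕ → ℝ) (t' : E → ℕ) (d : ℕ)
    (x : E → ℕ) (hne : (Base f d).Nonempty) :
    ∃ x', IsOptimal f C t' d x' ∧ ∀ y, IsOptimal f C t' d y → l1 x x' ≤ l1 x y := by
  obtain ⟨z, hz, hzmin⟩ := Set.exists_min_image (Base f d) (totalCost C t') (base_finite f d) hne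
  have hOptne : {y | IsOptimal f C t' d y}.Nonempty := ⟨z, hz, hzmin⟩
  have hOptfin : {y | IsOptimal f C t' d y}.Finite :=
    (base_finite f d).subset (fun y hy => hy.1)
  obtain ⟨x', hx', hmin⟩ := Set.exists_min_image _ (fun y => l1 x y) hOptfin hOptne
  exact ⟨x', hx', hmin⟩

lemma key_ineqs {f : Finset E → ℕ} {C : E → ℕ → ℕ → ℝ} {t t' : E → ℕ} {d : ℕ}
    {x x' : E → ℕ} (hx : IsOptimal f C t d x) (hx' : IsOptimal f C t' d x')
    (hmin : ∀ y, IsOptimal f C t' d y → l1 x x' ≤ l1 x y)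
    {a b : E} (hab : x a < x' a) (hba : x' b < x b)
    (h1 : move x' a b ∈ Base f d) (h2 : move x b a ∈ Base f d) :
    C a (x' a) (t' a) - C a (x' a - 1) (t' a) < C b (x' b + 1) (t' b) - C b (x' b) (t' b) ∧
    C b (x b) (t b) - C b (x b - 1) (t b) ≤ C a (x a + 1) (t a) - C a (x a) (t a) := by
  have hne : a ≠ b := by
    intro h
    rw [h] at hab
    omega
  constructor
  · have hnotopt : totalCost C t' x' < totalCost C t' (move x' a b) := by
      by_contra hle
      push_neg at hle
      have hopt2 : IsOptimal f C t' d (move x' a b) :=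
        ⟨h1, fun y hy => hle.trans (hx'.2 y hy)⟩
      have hm := hmin _ hopt2
      have hl := l1_move hne hab hba
      omega
    have hcm := cost_move C t' x' hne
    linarith
  · have hopt := hx.2 (move x b a) h2
    have hcm := cost_move C t x hne.symm
    linarith

end Min

section Main

variable {E : Type*} [Fintype E] [DecidableEq E]

lemma l1_comm (u v : E → ℕ) : l1 u v = l1 v u := by
  unfold l1
  apply Finset.sum_congr rfl
  intro e _
  omega

lemma l1_eq_double {x x' : E → ℕ} {e0 : E} (hsum : ∑ e, x e = ∑ e, x' e)
    (hother : ∀ e, e ≠ e0 → x e ≤ x' e) :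
    (l1 x x' : ℤ) = 2 * ((x e0 : ℤ) - x' e0) := by
  have hzsum : ∑ e, (x e : ℤ) = ∑ e, (x' e : ℤ) := by exact_mod_cast hsum
  have hsx := Finset.add_sum_erase Finset.univ (fun e => (x e : ℤ)) (Finset.mem_univ e0)
  have hsx' := Finset.add_sum_erase Finset.univ (fun e => (x' e : ℤ)) (Finset.mem_univ e0)
  have hkey : ∑ e ∈ Finset.univ.erase e0, ((x' e : ℤ) - x e) = (x e0 : ℤ) - x' e0 := by
    rw [Finset.sum_sub_distrib]
    linarith
  have h0 : (x' e0 : ℤ) ≤ x e0 := by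
    have hnn : (0 : ℤ) ≤ ∑ e ∈ Finset.univ.erase e0, ((x' e : ℤ) - x e) :=
      Finset.sum_nonneg fun e he => by
        have := hother e (Finset.mem_erase.mp he).1
        omega
    omega
  have herase : ∑ e ∈ Finset.univ.erase e0, (((x e : ℤ) - x' e).natAbs : ℤ) =
      ∑ e ∈ Finset.univ.erase e0, ((x' e : ℤ) - x e) :=
    Finset.sum_congr rfl fun e he => by
      have := hother e (Finset.mem_erase.mp he).1
      omega
  unfold l1
  rw [Nat.cast_sum]
  rw [← Finset.add_sum_erase Finset.univ (fun e => (((x e : ℤ) - x' e).natAbs : ℤ))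
    (Finset.mem_univ e0), herase, hkey]
  have : (((x e0 : ℤ) - x' e0).natAbs : ℤ) = (x e0 : ℤ) - x' e0 := by omega
  rw [this]
  ring

end Main

/-- For an integral polymatroid rank function `f` and nonnegative regular cost functions
`C_e`, for every optimal solution `x` of `P(t,d)` and every `t'` with `‖t - t'‖ = 1`,
there is an optimal solution `x'` of `P(t',d)` with `‖x - x'‖ ≤ 2`. -/
theorem sensitivity_parameter_shift {E : Type*} [Fintype E] [DecidableEq E] [Nonempty E]
    (f : Finset E → ℕ) (hf : IsPolymatroidRank f)
    (C : E → ℕ → ℕ → ℝ) (hC0 : ∀ e x t, 0 ≤ C e x t)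
    (hreg : ∀ e, Regular (C e))
    (d : ℕ) (t t' : E → ℕ) (ht : l1 t t' = 1)
    (x : E → ℕ) (hx : IsOptimal f C t d x) :
    ∃ x' : E → ℕ, IsOptimal f C t' d x' ∧ l1 x x' ≤ 2 := by
  classical
  obtain ⟨e0, he0, heq⟩ :
      ∃ e0 : E, (t' e0 = t e0 + 1 ∨ t e0 = t' e0 + 1) ∧ ∀ e, e ≠ e0 → t e = t' e := by
    have h1 : ∑ e, ((t e : ℤ) - t' e).natAbs = 1 := ht
    have hex : ∃ e0, ((t e0 : ℤ) - t' e0).natAbs ≠ 0 := by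
      by_contra hcon
      push_neg at hcon
      rw [Finset.sum_eq_zero (fun i _ => hcon i)] at h1
      omega
    obtain ⟨e0, he0⟩ := hex
    have hsplit := Finset.add_sum_erase Finset.univ
      (fun e => ((t e : ℤ) - t' e).natAbs) (Finset.mem_univ e0)
    rw [h1] at hsplit
    have hzero : ∀ e ∈ Finset.univ.erase e0, ((t e : ℤ) - t' e).natAbs = 0 := by
      rw [← Finset.sum_eq_zero_iff]
      omega
    refine ⟨e0, by omega, fun e hne => ?_⟩
    have := hzero e (Finset.mem_erase.mpr ⟨hne, Finset.mem_univ e⟩)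
    omega
  obtain ⟨x', hx'opt, hx'min⟩ := exists_opt_min f C t' d x ⟨x, hx.1⟩
  refine ⟨x', hx'opt, ?_⟩
  by_contra hlong
  push_neg at hlong
  have hl3 : 3 ≤ l1 x x' := hlong
  have hxd := hx.1.2
  have hx'd := hx'opt.1.2
  have hxex : ∃ c, x c ≠ x' c := by
    by_contra hcon
    push_neg at hcon
    have : l1 x x' = 0 := Finset.sum_eq_zero fun i _ => by rw [hcon i]; simp
    omega
  obtain ⟨c0, hc0⟩ := hxex
  have hsuppP : ∃ a, x a < x' a := by
    by_contra hcon
    push_neg at hcon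
    have hlt : ∑ e, x' e < ∑ e, x e :=
      Finset.sum_lt_sum (fun i _ => hcon i) ⟨c0, Finset.mem_univ c0, by have := hcon c0; omega⟩
    omega
  have hsuppN : ∃ b, x' b < x b := by
    by_contra hcon
    push_neg at hcon
    have hlt : ∑ e, x e < ∑ e, x' e :=
      Finset.sum_lt_sum (fun i _ => hcon i) ⟨c0, Finset.mem_univ c0, by have := hcon c0; omega⟩
    omega
  have generic : ∀ a b : E, a ≠ e0 → b ≠ e0 → x a < x' a → x' b < x b →
      move x' a b ∈ Base f d → move x b a ∈ Base f d → False := by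
    intro a b ha0 hb0 hab hba hm1 hm2
    obtain ⟨k1, k2⟩ := key_ineqs hx hx'opt hx'min hab hba hm1 hm2
    have ca : C a (x a + 1) (t a) - C a (x a + 1 - 1) (t a) ≤
        C a (x' a) (t a) - C a (x' a - 1) (t a) :=
      regular_convex (hreg a) (t a) (by omega) (by omega)
    have cb : C b (x' b + 1) (t b) - C b (x' b + 1 - 1) (t b) ≤
        C b (x b) (t b) - C b (x b - 1) (t b) :=
      regular_convex (hreg b) (t b) (by omega) (by omega)
    simp only [Nat.add_sub_cancel] at ca cb
    rw [← heq a ha0, ← heq b hb0] at k1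
    linarith
  rcases he0 with hcase | hcase
  · -- t' e0 = t e0 + 1
    have hstep1 : ¬ (x e0 < x' e0) := by
      intro hP
      obtain ⟨b, hbne, hblt, hm1, hm2⟩ := exchange hf hx.1 hx'opt.1 hP
      obtain ⟨k1, k2⟩ := key_ineqs hx hx'opt hx'min hP hblt hm1 hm2
      have cb : C b (x' b + 1) (t b) - C b (x' b + 1 - 1) (t b) ≤
          C b (x b) (t b) - C b (x b - 1) (t b) :=
        regular_convex (hreg b) (t b) (by omega) (by omega)
      simp only [Nat.add_sub_cancel] at cb
      have ca1 : C e0 (x e0 + 1) (t e0) - C e0 (x e0 + 1 - 1) (t e0) ≤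
          C e0 (x' e0) (t e0) - C e0 (x' e0 - 1) (t e0) :=
        regular_convex (hreg e0) (t e0) (by omega) hP
      simp only [Nat.add_sub_cancel] at ca1
      have ca2 := (hreg e0 (x' e0) (t e0) (by omega)).1
      rw [← heq b hbne, hcase] at k1
      linarith
    have hstep2 : ∀ b, b ≠ e0 → ¬ (x' b < x b) := by
      intro b hbne hN
      obtain ⟨a, hane, halt, hm2, hm1⟩ := exchange hf hx'opt.1 hx.1 hN
      have ha0 : a ≠ e0 := fun h => hstep1 (h ▸ halt)
      exact generic a b ha0 hbne halt hN hm1 hm2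
    have hN0 : x' e0 < x e0 := by
      obtain ⟨b, hb⟩ := hsuppN
      rcases eq_or_ne b e0 with rfl | hne
      · exact hb
      · exact absurd hb (hstep2 b hne)
    have hle : ∀ e, e ≠ e0 → x e ≤ x' e := fun e hne => le_of_not_gt (hstep2 e hne)
    have hl1 : (l1 x x' : ℤ) = 2 * ((x e0 : ℤ) - x' e0) :=
      l1_eq_double (by omega) hle
    have hgap : x' e0 + 2 ≤ x e0 := by omega
    obtain ⟨a, hane, halt, hm2, hm1⟩ := exchange hf hx'opt.1 hx.1 hN0
    obtain ⟨k1, k2⟩ := key_ineqs hx hx'opt hx'min halt hN0 hm1 hm2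
    rw [← heq a hane, hcase] at k1
    have ca : C a (x a + 1) (t a) - C a (x a + 1 - 1) (t a) ≤
        C a (x' a) (t a) - C a (x' a - 1) (t a) :=
      regular_convex (hreg a) (t a) (by omega) (by omega)
    simp only [Nat.add_sub_cancel] at ca
    have r2 := (hreg e0 (x' e0 + 1) (t e0) (by omega)).2
    simp only [Nat.add_sub_cancel] at r2
    have cv : C e0 (x' e0 + 2) (t e0) - C e0 (x' e0 + 2 - 1) (t e0) ≤
        C e0 (x e0) (t e0) - C e0 (x e0 - 1) (t e0) :=
      regular_convex (hreg e0) (t e0) (by omega) hgap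
    have h21 : x' e0 + 2 - 1 = x' e0 + 1 := by omega
    rw [h21] at cv
    linarith
  · -- t e0 = t' e0 + 1
    have hstep1 : ¬ (x' e0 < x e0) := by
      intro hN
      obtain ⟨a, hane, halt, hm2, hm1⟩ := exchange hf hx'opt.1 hx.1 hN
      obtain ⟨k1, k2⟩ := key_ineqs hx hx'opt hx'min halt hN hm1 hm2
      have ca : C a (x a + 1) (t a) - C a (x a + 1 - 1) (t a) ≤
          C a (x' a) (t a) - C a (x' a - 1) (t a) :=
        regular_convex (hreg a) (t a) (by omega) (by omega)
      simp only [Nat.add_sub_cancel] at ca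
      rw [← heq a hane] at k1
      rw [hcase] at k2
      have r1 := (hreg e0 (x' e0 + 1) (t' e0) (by omega)).1
      simp only [Nat.add_sub_cancel] at r1
      have cv : C e0 (x' e0 + 1) (t' e0 + 1) - C e0 (x' e0 + 1 - 1) (t' e0 + 1) ≤
          C e0 (x e0) (t' e0 + 1) - C e0 (x e0 - 1) (t' e0 + 1) :=
        regular_convex (hreg e0) (t' e0 + 1) (by omega) hN
      simp only [Nat.add_sub_cancel] at cv
      linarith
    have hstep2 : ∀ a, a ≠ e0 → ¬ (x a < x' a) := by
      intro a hane hP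
      obtain ⟨b, hbne', hblt, hm1, hm2⟩ := exchange hf hx.1 hx'opt.1 hP
      have hb0 : b ≠ e0 := fun h => hstep1 (h ▸ hblt)
      exact generic a b hane hb0 hP hblt hm1 hm2
    have hP0 : x e0 < x' e0 := by
      obtain ⟨a, ha⟩ := hsuppP
      rcases eq_or_ne a e0 with rfl | hne
      · exact ha
      · exact absurd ha (hstep2 a hne)
    have hle : ∀ e, e ≠ e0 → x' e ≤ x e := fun e hne => le_of_not_gt (hstep2 e hne)
    have hl1 : (l1 x' x : ℤ) = 2 * ((x' e0 : ℤ) - x e0) :=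
      l1_eq_double (by omega) hle
    rw [← l1_comm] at hl1
    have hgap : x e0 + 2 ≤ x' e0 := by omega
    obtain ⟨b, hbne, hblt, hm1, hm2⟩ := exchange hf hx.1 hx'opt.1 hP0
    obtain ⟨k1, k2⟩ := key_ineqs hx hx'opt hx'min hP0 hblt hm1 hm2
    rw [← heq b hbne] at k1
    rw [hcase] at k2
    have cb : C b (x' b + 1) (t b) - C b (x' b + 1 - 1) (t b) ≤
        C b (x b) (t b) - C b (x b - 1) (t b) :=
      regular_convex (hreg b) (t b) (by omega) (by omega)
    simp only [Nat.add_sub_cancel] at cb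
    have r2 := (hreg e0 (x e0 + 1) (t' e0) (by omega)).2
    simp only [Nat.add_sub_cancel] at r2
    have cv : C e0 (x e0 + 2) (t' e0) - C e0 (x e0 + 2 - 1) (t' e0) ≤
        C e0 (x' e0) (t' e0) - C e0 (x' e0 - 1) (t' e0) :=
      regular_convex (hreg e0) (t' e0) (by omega) hgap
    have h21 : x e0 + 2 - 1 = x e0 + 1 := by omega
    rw [h21] at cv
    linarith
end

section
/- (Sensitivity to a unit demand change) Let f : 2^E → ℕ be an integral polymatroid rank function, let every C_e : ℕ×ℕ → ℝ≥0 be regular, let t ∈ ℕ^E, and let d, d' ∈ ℕ with |d − d'| = 1 and B_f(d) ≠ ∅ ≠ B_f(d'). Then for every optimal solution x of P(t,d) there exists an optimal solution x' of P(t,d') with ‖x − x'‖ ≤ 1. -/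
open Finset

set_option linter.unusedSectionVars false
set_option linter.unusedVariables false
set_option maxHeartbeats 1000000

section auxSensitivity
variable {E : Type*} [Fintype E] [DecidableEq E]

lemma sum_split' {M : Type*} [AddCommMonoid M] (U : Finset E) (G : E → M) {a b : E}
    (ha : a ∈ U) (hb : b ∈ U) (hab : a ≠ b) :
    ∑ e ∈ U, G e = G a + (G b + ∑ e ∈ (U.erase a).erase b, G e) := by
  rw [Finset.add_sum_erase _ G (Finset.mem_erase.mpr ⟨Ne.symm hab, hb⟩),
    Finset.add_sum_erase _ G ha]

lemma tight_union_inter (f : Finset E → ℕ) (hf : IsPolymatroidRank f) (u : E → ℕ)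
    (hu : ∀ U : Finset E, ∑ e ∈ U, u e ≤ f U) {A B : Finset E}
    (hA : ∑ e ∈ A, u e = f A) (hB : ∑ e ∈ B, u e = f B) :
    ∑ e ∈ A ∪ B, u e = f (A ∪ B) ∧ ∑ e ∈ A ∩ B, u e = f (A ∩ B) := by
  have h1 := hu (A ∪ B)
  have h2 := hu (A ∩ B)
  have h3 := hf.2.2 A B
  have h4 : ∑ e ∈ A ∪ B, u e + ∑ e ∈ A ∩ B, u e = ∑ e ∈ A, u e + ∑ e ∈ B, u e :=
    Finset.sum_union_inter
  omega

lemma sup_tight {ι : Type*} (f : Finset E → ℕ) (hf : IsPolymatroidRank f) (u : E → ℕ)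
    (hu : ∀ U : Finset E, ∑ e ∈ U, u e ≤ f U) (S : Finset ι) (g : ι → Finset E)
    (h : ∀ i ∈ S, ∑ e ∈ g i, u e = f (g i)) :
    ∑ e ∈ S.sup g, u e = f (S.sup g) := by
  classical
  induction S using Finset.induction_on with
  | empty => simp [hf.1]
  | @insert i S hnot ih =>
      rw [Finset.sup_insert]
      have h1 := h i (Finset.mem_insert_self i S)
      have h2 := ih (fun j hj => h j (Finset.mem_insert_of_mem hj))
      have := (tight_union_inter f hf u hu h1 h2).1
      simpa [Finset.sup_eq_union] using this

lemma sum_swap_eq (U : Finset E) (w : E → ℕ) (i j : E)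
    (hij : i ≠ j) (hi : i ∈ U) (hj : j ∈ U) (hw : 1 ≤ w j) :
    ∑ e ∈ U, (if e = i then w e + 1 else if e = j then w e - 1 else w e) = ∑ e ∈ U, w e := by
  rw [sum_split' U (fun e => if e = i then w e + 1 else if e = j then w e - 1 else w e) hi hj hij,
    sum_split' U w hi hj hij]
  have ht : ∑ e ∈ (U.erase i).erase j, (if e = i then w e + 1 else if e = j then w e - 1 else w e)
      = ∑ e ∈ (U.erase i).erase j, w e := by
    refine Finset.sum_congr rfl fun e he => ?_
    have h1 := (Finset.mem_erase.mp he).1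
    have h2 := (Finset.mem_erase.mp (Finset.mem_erase.mp he).2).1
    simp [h1, h2]
  simp only [if_pos rfl, Ne.symm hij, if_false, ite_false, ite_true, if_neg (Ne.symm hij)]
  rw [ht]
  omega

lemma exchange_s4 (f : Finset E → ℕ) (hf : IsPolymatroidRank f) (u v : E → ℕ)
    (hu : ∀ U : Finset E, ∑ e ∈ U, u e ≤ f U) (hv : ∀ U : Finset E, ∑ e ∈ U, v e ≤ f U)
    (hsum : ∑ e, u e < ∑ e, v e) (b : E) (hb : v b < u b) :
    ∃ a, u a < v a ∧
      (∀ U : Finset E, ∑ e ∈ U, (if e = b then v e + 1 else if e = a then v e - 1 else v e) ≤ f U) ∧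
      (∀ U : Finset E, ∑ e ∈ U, (if e = a then u e + 1 else if e = b then u e - 1 else u e) ≤ f U) := by
  classical
  obtain ⟨T, hbT, hPT, hcaseT⟩ :
      ∃ T : Finset E, b ∈ T ∧
        (∀ U : Finset E, b ∈ U → ∑ e ∈ U, v e = f U → T ⊆ U) ∧
        ((∑ e ∈ T, v e = f T) ∨ T = Finset.univ) := by
    by_cases hex : ∃ U : Finset E, b ∈ U ∧ ∑ e ∈ U, v e = f U
    · obtain ⟨U₀, hU₀⟩ := hex
      obtain ⟨T, hTmem, hTmin⟩ := Finset.exists_min_image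
        (Finset.univ.filter (fun U : Finset E => b ∈ U ∧ ∑ e ∈ U, v e = f U)) Finset.card
        ⟨U₀, by simp [hU₀.1, hU₀.2]⟩
      rw [Finset.mem_filter] at hTmem
      refine ⟨T, hTmem.2.1, ?_, Or.inl hTmem.2.2⟩
      intro U hbU htU
      have hint := (tight_union_inter f hf v hv hTmem.2.2 htU).2
      have hmem' : T ∩ U ∈ Finset.univ.filter (fun U : Finset E => b ∈ U ∧ ∑ e ∈ U, v e = f U) := by
        rw [Finset.mem_filter]
        exact ⟨Finset.mem_univ _, Finset.mem_inter.mpr ⟨hTmem.2.1, hbU⟩, hint⟩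
      have hcard := hTmin _ hmem'
      have heq : T ∩ U = T := Finset.eq_of_subset_of_card_le Finset.inter_subset_left hcard
      intro e he
      rw [← heq] at he
      exact (Finset.mem_inter.mp he).2
    · push_neg at hex
      exact ⟨Finset.univ, Finset.mem_univ b,
        fun U hbU htU => absurd htU (hex U hbU), Or.inr rfl⟩
  have hTuv : ∑ e ∈ T, u e ≤ ∑ e ∈ T, v e := by
    rcases hcaseT with h | h
    · rw [h]; exact hu T
    · rw [h]; exact hsum.le
  obtain ⟨a, haT, hauv, hQ⟩ :
      ∃ a, a ∈ T ∧ u a < v a ∧ ∀ U : Finset E, a ∈ U → ∑ e ∈ U, u e = f U → b ∈ U := by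
    by_contra hcon
    push_neg at hcon
    set N : Finset E := T.filter (fun e => u e < v e) with hN
    have hNW : ∀ a : {z // z ∈ N},
        ∃ U : Finset E, (a : E) ∈ U ∧ ∑ e ∈ U, u e = f U ∧ b ∉ U := by
      rintro ⟨a, ha⟩
      rw [hN, Finset.mem_filter] at ha
      exact hcon a ha.1 ha.2
    choose g hg1 hg2 hg3 using hNW
    set W : Finset E := N.attach.sup g with hW
    have hWtight : ∑ e ∈ W, u e = f W := sup_tight f hf u hu N.attach g (fun i _ => hg2 i)
    have hbW : b ∉ W := by
      intro hbw
      rw [hW] at hbw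
      obtain ⟨i, _, hi⟩ := Finset.mem_sup.mp hbw
      exact hg3 i hi
    have hNsubW : ∀ e ∈ N, e ∈ W := by
      intro e he
      rw [hW]
      exact Finset.mem_sup.mpr ⟨⟨e, he⟩, Finset.mem_attach _ _, hg1 ⟨e, he⟩⟩
    have hpt : ∀ e ∈ T \ W, v e ≤ u e := by
      intro e he
      obtain ⟨heT, heW⟩ := Finset.mem_sdiff.mp he
      by_contra hlt
      push_neg at hlt
      exact heW (hNsubW e (Finset.mem_filter.mpr ⟨heT, hlt⟩))
    have hbTW : b ∈ T \ W := Finset.mem_sdiff.mpr ⟨hbT, hbW⟩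
    have hstrict : ∑ e ∈ T \ W, v e < ∑ e ∈ T \ W, u e :=
      Finset.sum_lt_sum hpt ⟨b, hbTW, hb⟩
    have hkey : ∑ e ∈ T \ W, u e ≤ ∑ e ∈ T \ W, v e := by
      have hc3 : ∑ e ∈ T ∪ W, u e = ∑ e ∈ W, u e + ∑ e ∈ T \ W, u e := by
        have huni : T ∪ W = W ∪ (T \ W) := by
          rw [Finset.union_sdiff_self_eq_union, Finset.union_comm]
        rw [huni, Finset.sum_union Finset.disjoint_sdiff]
      have hc4 : ∑ e ∈ T ∩ W, v e + ∑ e ∈ T \ W, v e = ∑ e ∈ T, v e :=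
        Finset.sum_inter_add_sum_sdiff T W v
      rcases hcaseT with htT | hTuniv
      · have c1 : ∑ e ∈ T ∩ W, v e ≤ f (T ∩ W) := hv _
        have c2 : ∑ e ∈ T ∪ W, u e ≤ f (T ∪ W) := hu _
        have c5 := hf.2.2 T W
        omega
      · subst hTuniv
        have c6 : ∑ e ∈ Finset.univ \ W, u e + ∑ e ∈ W, u e = ∑ e, u e :=
          Finset.sum_sdiff (Finset.subset_univ W)
        have c7 : ∑ e ∈ Finset.univ \ W, v e + ∑ e ∈ W, v e = ∑ e, v e :=
          Finset.sum_sdiff (Finset.subset_univ W)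
        have c8 : ∑ e ∈ W, v e ≤ f W := hv W
        omega
    omega
  have hab : a ≠ b := by rintro rfl; omega
  refine ⟨a, hauv, ?_, ?_⟩
  · intro U
    by_cases hbU : b ∈ U
    · by_cases haU : a ∈ U
      · rw [sum_swap_eq U v b a (Ne.symm hab) hbU haU (by omega)]
        exact hv U
      · have hne : ∑ e ∈ U, v e ≠ f U := fun h => haU (hPT U hbU h haT)
        have hs : ∑ e ∈ U, (if e = b then v e + 1 else if e = a then v e - 1 else v e)
            = ∑ e ∈ U, v e + 1 := by
          rw [← Finset.add_sum_erase U (fun e => if e = b then v e + 1 else if e = a then v e - 1 else v e) hbU,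
            ← Finset.add_sum_erase U v hbU]
          have ht : ∑ e ∈ U.erase b, (if e = b then v e + 1 else if e = a then v e - 1 else v e)
              = ∑ e ∈ U.erase b, v e := by
            refine Finset.sum_congr rfl fun e he => ?_
            have h1 := (Finset.mem_erase.mp he).1
            have h2 : e ≠ a := fun h => haU (h ▸ (Finset.mem_erase.mp he).2)
            simp [h1, h2]
          rw [ht]
          simp
          omega
        have := hv U
        omega
    · have hpt : ∀ e ∈ U, (if e = b then v e + 1 else if e = a then v e - 1 else v e) ≤ v e := by
        intro e he
        have heb : e ≠ b := fun h => hbU (h ▸ he)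
        simp only [heb, if_false, ite_false]
        split <;> omega
      exact le_trans (Finset.sum_le_sum hpt) (hv U)
  · intro U
    by_cases haU : a ∈ U
    · by_cases hbU : b ∈ U
      · rw [sum_swap_eq U u a b hab haU hbU (by omega)]
        exact hu U
      · have hne : ∑ e ∈ U, u e ≠ f U := fun h => hbU (hQ U haU h)
        have hs : ∑ e ∈ U, (if e = a then u e + 1 else if e = b then u e - 1 else u e)
            = ∑ e ∈ U, u e + 1 := by
          rw [← Finset.add_sum_erase U (fun e => if e = a then u e + 1 else if e = b then u e - 1 else u e) haU,
            ← Finset.add_sum_erase U u haU]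
          have ht : ∑ e ∈ U.erase a, (if e = a then u e + 1 else if e = b then u e - 1 else u e)
              = ∑ e ∈ U.erase a, u e := by
            refine Finset.sum_congr rfl fun e he => ?_
            have h1 := (Finset.mem_erase.mp he).1
            have h2 : e ≠ b := fun h => hbU (h ▸ (Finset.mem_erase.mp he).2)
            simp [h1, h2]
          rw [ht]
          simp
          omega
        have := hu U
        omega
    · have hpt : ∀ e ∈ U, (if e = a then u e + 1 else if e = b then u e - 1 else u e) ≤ u e := by
        intro e he
        have hea : e ≠ a := fun h => haU (h ▸ he)
        simp only [hea, if_false, ite_false]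
        split <;> omega
      exact le_trans (Finset.sum_le_sum hpt) (hu U)

lemma convex_mono (C : ℕ → ℕ → ℝ) (hC : Regular C) (s : ℕ) (p q : ℕ) (hp : 1 ≤ p)
    (hpq : p ≤ q) : C p s - C (p - 1) s ≤ C q s - C (q - 1) s := by
  induction q, hpq using Nat.le_induction with
  | base => exact le_refl _
  | succ n hn ih =>
      have h1 := (hC n s (le_trans hp hn)).1
      have h2 := (hC n s (le_trans hp hn)).2
      simp only [Nat.add_sub_cancel]
      linarith

lemma cost_diff (G H : E → ℝ) (a b : E) (hab : a ≠ b)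
    (h : ∀ e, e ≠ a → e ≠ b → G e = H e) :
    ∑ e, G e - ∑ e, H e = (G a - H a) + (G b - H b) := by
  rw [sum_split' Finset.univ G (Finset.mem_univ a) (Finset.mem_univ b) hab,
    sum_split' Finset.univ H (Finset.mem_univ a) (Finset.mem_univ b) hab]
  have ht : ∑ e ∈ (Finset.univ.erase a).erase b, G e
      = ∑ e ∈ (Finset.univ.erase a).erase b, H e := by
    refine Finset.sum_congr rfl fun e he => ?_
    have h1 := (Finset.mem_erase.mp he).1
    have h2 := (Finset.mem_erase.mp (Finset.mem_erase.mp he).2).1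
    exact h e h2 h1
  rw [ht]
  ring

lemma improve (f : Finset E → ℕ) (C : E → ℕ → ℕ → ℝ)
    (hreg : ∀ e, Regular (C e)) (t : E → ℕ) (d : ℕ) (x y : E → ℕ)
    (hx : IsOptimal f C t d x) (p q : E) (h1 : x p < y p) (h2 : y q < x q)
    (hx' : ∀ U : Finset E, ∑ e ∈ U, (if e = p then x e + 1 else if e = q then x e - 1 else x e) ≤ f U) :
    totalCost C t (fun e => if e = q then y e + 1 else if e = p then y e - 1 else y e) ≤
      totalCost C t y := by
  have hpq : p ≠ q := by rintro rfl; omega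
  have hxd : ∑ e, x e = d := hx.1.2
  have hsx' : ∑ e, (if e = p then x e + 1 else if e = q then x e - 1 else x e) = d := by
    rw [sum_split' Finset.univ (fun e => if e = p then x e + 1 else if e = q then x e - 1 else x e)
      (Finset.mem_univ p) (Finset.mem_univ q) hpq]
    rw [sum_split' Finset.univ x (Finset.mem_univ p) (Finset.mem_univ q) hpq] at hxd
    have ht : ∑ e ∈ (Finset.univ.erase p).erase q,
        (if e = p then x e + 1 else if e = q then x e - 1 else x e)
        = ∑ e ∈ (Finset.univ.erase p).erase q, x e := by
      refine Finset.sum_congr rfl fun e he => ?_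
      have ha := (Finset.mem_erase.mp he).1
      have hb := (Finset.mem_erase.mp (Finset.mem_erase.mp he).2).1
      simp [ha, hb]
    simp only [ht]
    simp [hpq, Ne.symm hpq]
    omega
  have hxopt := hx.2 _ ⟨hx', hsx'⟩
  have hdx : totalCost C t (fun e => if e = p then x e + 1 else if e = q then x e - 1 else x e)
      - totalCost C t x
      = (C p (x p + 1) (t p) - C p (x p) (t p)) + (C q (x q - 1) (t q) - C q (x q) (t q)) := by
    have := cost_diff (fun e => C e (if e = p then x e + 1 else if e = q then x e - 1 else x e) (t e))
      (fun e => C e (x e) (t e)) p q hpq (fun e he1 he2 => by simp [he1, he2])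
    simpa [totalCost, hpq, Ne.symm hpq] using this
  have hdy : totalCost C t (fun e => if e = q then y e + 1 else if e = p then y e - 1 else y e)
      - totalCost C t y
      = (C q (y q + 1) (t q) - C q (y q) (t q)) + (C p (y p - 1) (t p) - C p (y p) (t p)) := by
    have := cost_diff (fun e => C e (if e = q then y e + 1 else if e = p then y e - 1 else y e) (t e))
      (fun e => C e (y e) (t e)) q p (Ne.symm hpq) (fun e he1 he2 => by simp [he1, he2])
    simpa [totalCost, hpq, Ne.symm hpq] using this
  have conv1 : C q (y q + 1) (t q) - C q (y q) (t q) ≤ C q (x q) (t q) - C q (x q - 1) (t q) := by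
    have := convex_mono (C q) (hreg q) (t q) (y q + 1) (x q) (by omega) (by omega)
    simpa [Nat.add_sub_cancel] using this
  have conv2 : C p (x p + 1) (t p) - C p (x p) (t p) ≤ C p (y p) (t p) - C p (y p - 1) (t p) := by
    have := convex_mono (C p) (hreg p) (t p) (x p + 1) (y p) (by omega) (by omega)
    simpa [Nat.add_sub_cancel] using this
  linarith

end auxSensitivity

/-- **Sensitivity to a unit demand change.** Let `f` be an integral polymatroid rank
function, all `C_e` nonnegative and regular, `t ∈ ℕ^E`, and `d, d' ∈ ℕ` with `|d - d'| = 1`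
and `B_f(d) ≠ ∅ ≠ B_f(d')`. Then for every optimal solution `x` of `P(t,d)` there is an
optimal solution `x'` of `P(t,d')` with `‖x - x'‖ ≤ 1`. -/
theorem sensitivity_unit_demand_change {E : Type*} [Fintype E] [DecidableEq E] [Nonempty E]
    (f : Finset E → ℕ) (hf : IsPolymatroidRank f)
    (C : E → ℕ → ℕ → ℝ) (hC0 : ∀ e x t, 0 ≤ C e x t)
    (hreg : ∀ e, Regular (C e))
    (t : E → ℕ) (d d' : ℕ) (hd : ((d : ℤ) - (d' : ℤ)).natAbs = 1)
    (hBd : (Base f d).Nonempty) (hBd' : (Base f d').Nonempty)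
    (x : E → ℕ) (hx : IsOptimal f C t d x) :
    ∃ x' : E → ℕ, IsOptimal f C t d' x' ∧ l1 x x' ≤ 1 := by
  classical
  obtain ⟨y₀, hy₀⟩ := hBd'
  set F : Finset (E → ℕ) :=
    (Finset.univ : Finset (E → Fin (d' + 1))).image (fun g e => (g e : ℕ)) with hFdef
  have hmemF : ∀ z : E → ℕ, z ∈ Base f d' → z ∈ F := by
    intro z hz
    have hle : ∀ e, z e < d' + 1 := by
      intro e
      have h1 := Finset.single_le_sum (f := z) (fun i _ => Nat.zero_le _) (Finset.mem_univ e)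
      have h2 := hz.2
      omega
    rw [hFdef]
    exact Finset.mem_image.mpr ⟨fun e => ⟨z e, hle e⟩, Finset.mem_univ _, funext fun e => rfl⟩
  obtain ⟨y₁, hy₁F, hy₁min⟩ := Finset.exists_min_image (F.filter (fun z => z ∈ Base f d'))
    (totalCost C t) ⟨y₀, Finset.mem_filter.mpr ⟨hmemF y₀ hy₀, hy₀⟩⟩
  have hy₁Base : y₁ ∈ Base f d' := (Finset.mem_filter.mp hy₁F).2
  have hy₁opt : IsOptimal f C t d' y₁ :=
    ⟨hy₁Base, fun z hz => hy₁min z (Finset.mem_filter.mpr ⟨hmemF z hz, hz⟩)⟩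
  obtain ⟨y, hyF2, hymin⟩ := Finset.exists_min_image
    ((F.filter (fun z => z ∈ Base f d')).filter (fun z => totalCost C t z = totalCost C t y₁))
    (l1 x) ⟨y₁, Finset.mem_filter.mpr ⟨hy₁F, rfl⟩⟩
  have hyBase : y ∈ Base f d' := (Finset.mem_filter.mp (Finset.mem_filter.mp hyF2).1).2
  have hycost : totalCost C t y = totalCost C t y₁ := (Finset.mem_filter.mp hyF2).2
  have hyopt : IsOptimal f C t d' y := ⟨hyBase, fun z hz => hycost ▸ hy₁opt.2 z hz⟩
  by_cases hl1 : l1 x y ≤ 1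
  · exact ⟨y, hyopt, hl1⟩
  push_neg at hl1
  exfalso
  have hxd : ∑ e, x e = d := hx.1.2
  have hyd : ∑ e, y e = d' := hyBase.2
  have hcast : ∀ w : E → ℕ, (l1 x w : ℤ) = ∑ e, (((x e : ℤ) - (w e : ℤ)).natAbs : ℤ) := by
    intro w
    unfold l1
    push_cast
    rfl
  have hP : ∃ p', x p' < y p' := by
    by_contra h
    push_neg at h
    have heq : (l1 x y : ℤ) = (d : ℤ) - (d' : ℤ) := by
      rw [hcast y]
      have h2 : ∀ e ∈ Finset.univ, (((x e : ℤ) - (y e : ℤ)).natAbs : ℤ)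
          = (x e : ℤ) - (y e : ℤ) := by
        intro e _
        have := h e
        omega
      rw [Finset.sum_congr rfl h2, Finset.sum_sub_distrib, ← Nat.cast_sum, ← Nat.cast_sum,
        hxd, hyd]
    omega
  have hQ : ∃ q', y q' < x q' := by
    by_contra h
    push_neg at h
    have heq : (l1 x y : ℤ) = (d' : ℤ) - (d : ℤ) := by
      rw [hcast y]
      have h2 : ∀ e ∈ Finset.univ, (((x e : ℤ) - (y e : ℤ)).natAbs : ℤ)
          = (y e : ℤ) - (x e : ℤ) := by
        intro e _
        have := h e
        omega
      rw [Finset.sum_congr rfl h2, Finset.sum_sub_distrib, ← Nat.cast_sum, ← Nat.cast_sum,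
        hxd, hyd]
    omega
  obtain ⟨p, hp⟩ := hP
  obtain ⟨q, hq⟩ := hQ
  have final : ∀ p' q' : E, x p' < y p' → y q' < x q' →
      (∀ U : Finset E, ∑ e ∈ U, (if e = q' then y e + 1 else if e = p' then y e - 1 else y e) ≤ f U) →
      totalCost C t (fun e => if e = q' then y e + 1 else if e = p' then y e - 1 else y e) ≤
        totalCost C t y → False := by
    intro p' q' hp' hq' hfeas hcost
    have hne : p' ≠ q' := by rintro rfl; omega
    set y' : E → ℕ := fun e => if e = q' then y e + 1 else if e = p' then y e - 1 else y e
      with hy'def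
    have htail : ∑ e ∈ (Finset.univ.erase p').erase q', y' e
        = ∑ e ∈ (Finset.univ.erase p').erase q', y e := by
      refine Finset.sum_congr rfl fun e he => ?_
      have ha := (Finset.mem_erase.mp he).1
      have hb := (Finset.mem_erase.mp (Finset.mem_erase.mp he).2).1
      simp [hy'def, ha, hb]
    have e1 : y' p' = y p' - 1 := by simp [hy'def, hne]
    have e2 : y' q' = y q' + 1 := by simp [hy'def]
    have hsy' : ∑ e, y' e = d' := by
      rw [sum_split' Finset.univ y' (Finset.mem_univ p') (Finset.mem_univ q') hne, htail, e1, e2]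
      rw [sum_split' Finset.univ y (Finset.mem_univ p') (Finset.mem_univ q') hne] at hyd
      omega
    have hfeas' : ∀ U : Finset E, ∑ e ∈ U, y' e ≤ f U := hfeas
    have hy'Base : y' ∈ Base f d' := ⟨hfeas', hsy'⟩
    have hy'F2 : y' ∈ (F.filter (fun z => z ∈ Base f d')).filter
        (fun z => totalCost C t z = totalCost C t y₁) := by
      refine Finset.mem_filter.mpr ⟨Finset.mem_filter.mpr ⟨hmemF y' hy'Base, hy'Base⟩, ?_⟩
      have h3 := hy₁opt.2 y' hy'Base
      have h4 : totalCost C t y' ≤ totalCost C t y := hcost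
      linarith [hycost.le, hycost.ge]
    have hl1lt : l1 x y' + 2 = l1 x y := by
      have c1 : (l1 x y' : ℤ) + 2 = (l1 x y : ℤ) := by
        rw [hcast y', hcast y]
        rw [sum_split' Finset.univ (fun e => (((x e : ℤ) - (y' e : ℤ)).natAbs : ℤ))
          (Finset.mem_univ p') (Finset.mem_univ q') hne]
        rw [sum_split' Finset.univ (fun e => (((x e : ℤ) - (y e : ℤ)).natAbs : ℤ))
          (Finset.mem_univ p') (Finset.mem_univ q') hne]
        have ht2 : ∑ e ∈ (Finset.univ.erase p').erase q', (((x e : ℤ) - (y' e : ℤ)).natAbs : ℤ)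
            = ∑ e ∈ (Finset.univ.erase p').erase q', (((x e : ℤ) - (y e : ℤ)).natAbs : ℤ) := by
          refine Finset.sum_congr rfl fun e he => ?_
          have ha := (Finset.mem_erase.mp he).1
          have hb := (Finset.mem_erase.mp (Finset.mem_erase.mp he).2).1
          simp [hy'def, ha, hb]
        simp only [ht2, e1, e2]
        have hyp1 : 1 ≤ y p' := by omega
        have hc1 : ((y p' - 1 : ℕ) : ℤ) = (y p' : ℤ) - 1 := by omega
        have hc2 : ((y q' + 1 : ℕ) : ℤ) = (y q' : ℤ) + 1 := by omega
        rw [hc1, hc2]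
        have k1 : (((x p' : ℤ) - ((y p' : ℤ) - 1)).natAbs : ℤ)
            = (((x p' : ℤ) - (y p' : ℤ)).natAbs : ℤ) - 1 := by omega
        have k2 : (((x q' : ℤ) - ((y q' : ℤ) + 1)).natAbs : ℤ)
            = (((x q' : ℤ) - (y q' : ℤ)).natAbs : ℤ) - 1 := by omega
        rw [k1, k2]
        ring
      omega
    have := hymin y' hy'F2
    omega
  have hdd : d' = d + 1 ∨ d = d' + 1 := by omega
  rcases hdd with hcase | hcase
  · have hsum : ∑ e, x e < ∑ e, y e := by omega
    obtain ⟨a, ha, hvfeas, hufeas⟩ := exchange_s4 f hf x y hx.1.1 hyBase.1 hsum q hq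
    exact final a q ha hq hvfeas (improve f C hreg t d x y hx a q ha hq hufeas)
  · have hsum : ∑ e, y e < ∑ e, x e := by omega
    obtain ⟨a, ha, hvfeas, hufeas⟩ := exchange_s4 f hf y x hyBase.1 hx.1.1 hsum p hp
    exact final p a hp ha hufeas (improve f C hreg t d x y hx p a hp ha hvfeas)
end

section
/- (Polymatroid exchange lemma) Let f : 2^E → ℕ be an integral polymatroid rank function and d ∈ ℕ. Let e*, g*, e, g ∈ E with e ∉ {e*, g*}, g ∉ {e*, e}, and e* ≠ g*. Suppose x ∈ B_f(d), x − χ_{e*} + χ_{g*} ∈ B_f(d), x − χ_{e*} + χ_{g*} − χ_e + χ_g ∈ B_f(d), but x − χ_e + χ_g ∉ B_f(d). Then both x − χ_e + χ_{g*} ∈ B_f(d) and x − χ_{e*} + χ_g ∈ B_f(d). -/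
open Finset

lemma chi_le_of_one_le {E : Type*} [DecidableEq E] (x : E → ℕ) (a : E) (ha : 1 ≤ x a)
    (e' : E) : chi a e' ≤ x e' := by
  unfold chi; split
  · subst ‹e' = a›; exact ha
  · exact Nat.zero_le _

lemma sum_chi_int {E : Type*} [DecidableEq E] (a : E) (U : Finset E) :
    (∑ e' ∈ U, (chi a e' : ℤ)) = if a ∈ U then 1 else 0 := by
  simp [chi, Finset.sum_ite_eq']

lemma sum_adj_int {E : Type*} [DecidableEq E] (x : E → ℕ) (a b : E) (ha : 1 ≤ x a)
    (U : Finset E) :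
    (∑ e' ∈ U, ((x - chi a + chi b) e' : ℤ))
      = (∑ e' ∈ U, (x e' : ℤ)) - (if a ∈ U then 1 else 0) + (if b ∈ U then 1 else 0) := by
  have hterm : ∀ e' ∈ U, ((x - chi a + chi b) e' : ℤ)
      = (x e' : ℤ) - (chi a e' : ℤ) + (chi b e' : ℤ) := by
    intro e' _
    have h := chi_le_of_one_le x a ha e'
    simp only [Pi.add_apply, Pi.sub_apply]
    omega
  rw [Finset.sum_congr rfl hterm, Finset.sum_add_distrib, Finset.sum_sub_distrib,
    sum_chi_int, sum_chi_int]

lemma one_le_of_sum_adj_eq {E : Type*} [Fintype E] [DecidableEq E] (y : E → ℕ) (a b : E)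
    (hab : b ≠ a) (h : ∑ e', (y - chi a + chi b) e' = ∑ e', y e') : 1 ≤ y a := by
  by_contra hcon
  have h0 : y a = 0 := by omega
  have heq : (y - chi a + chi b) = y + chi b := by
    funext e'
    simp only [Pi.add_apply, Pi.sub_apply, chi]
    by_cases he : e' = a
    · subst he
      rw [if_pos rfl, if_neg (fun hh => hab hh.symm), h0]
    · rw [if_neg he]
      omega
  rw [heq] at h
  have h2 : ∑ e', (y + chi b) e' = (∑ e', y e') + 1 := by
    simp [Finset.sum_add_distrib, chi]
  omega

/-- **Polymatroid exchange lemma.** Let `f` be an integral polymatroid rank function and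
`d ∈ ℕ`. Let `e*, g*, e, g ∈ E` with `e ∉ {e*, g*}`, `g ∉ {e*, e}`, and `e* ≠ g*`. If
`x ∈ B_f(d)`, `x - χ_{e*} + χ_{g*} ∈ B_f(d)`, `x - χ_{e*} + χ_{g*} - χ_e + χ_g ∈ B_f(d)`,
but `x - χ_e + χ_g ∉ B_f(d)`, then both `x - χ_e + χ_{g*} ∈ B_f(d)` and
`x - χ_{e*} + χ_g ∈ B_f(d)`. -/
theorem polymatroid_exchange {E : Type*} [Fintype E] [DecidableEq E] [Nonempty E]
    (f : Finset E → ℕ) (hf : IsPolymatroidRank f) (d : ℕ)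
    (estar gstar e g : E)
    (he1 : e ≠ estar) (he2 : e ≠ gstar) (hg1 : g ≠ estar) (hg2 : g ≠ e)
    (hstar : estar ≠ gstar)
    (x : E → ℕ) (hx : x ∈ Base f d)
    (hy : x - chi estar + chi gstar ∈ Base f d)
    (hy' : x - chi estar + chi gstar - chi e + chi g ∈ Base f d)
    (hnot : x - chi e + chi g ∉ Base f d) :
    x - chi e + chi gstar ∈ Base f d ∧ x - chi estar + chi g ∈ Base f d := by
  obtain ⟨hf0, hmono, hsub⟩ := hf
  obtain ⟨hxU, hxs⟩ := hx
  obtain ⟨hyU, hys⟩ := hy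
  obtain ⟨hy'U, hy's⟩ := hy'
  -- positivity of the two coordinates we decrease
  have hxe1 : 1 ≤ x estar :=
    one_le_of_sum_adj_eq x estar gstar (Ne.symm hstar) (by rw [hys, hxs])
  have hye : (x - chi estar + chi gstar) e = x e := by
    simp [Pi.add_apply, Pi.sub_apply, chi, he1, he2]
  have hxe : 1 ≤ x e := by
    have h := one_le_of_sum_adj_eq (x - chi estar + chi gstar) e g hg2 (by rw [hy's, hys])
    rwa [hye] at h
  -- integer versions of the constraints
  have hXle : ∀ U : Finset E, (∑ e' ∈ U, (x e' : ℤ)) ≤ (f U : ℤ) := by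
    intro U; exact_mod_cast hxU U
  have hXd : (∑ e', (x e' : ℤ)) = (d : ℤ) := by exact_mod_cast hxs
  have hY'le : ∀ U : Finset E, (∑ e' ∈ U, (x e' : ℤ))
      - (if estar ∈ U then 1 else 0) + (if gstar ∈ U then 1 else 0)
      - (if e ∈ U then 1 else 0) + (if g ∈ U then 1 else 0) ≤ (f U : ℤ) := by
    intro U
    have hy1 : 1 ≤ (x - chi estar + chi gstar) e := by rw [hye]; exact hxe
    have h2 := sum_adj_int (x - chi estar + chi gstar) e g hy1 U
    have h3 := sum_adj_int x estar gstar hxe1 U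
    rw [h3] at h2
    have h : (∑ e' ∈ U, (((x - chi estar + chi gstar - chi e + chi g)) e' : ℤ)) ≤ (f U : ℤ) := by
      exact_mod_cast hy'U U
    rw [h2] at h
    exact h
  -- additivity of sums under union/intersection
  have hadd : ∀ U V : Finset E,
      (∑ e' ∈ U ∪ V, (x e' : ℤ)) + (∑ e' ∈ U ∩ V, (x e' : ℤ))
        = (∑ e' ∈ U, (x e' : ℤ)) + (∑ e' ∈ V, (x e' : ℤ)) := by
    intro U V
    exact Finset.sum_union_inter
  -- extract a tight set from hnot
  have hz_sum : ∑ e', (x - chi e + chi g) e' = d := by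
    have h2 := sum_adj_int x e g hxe Finset.univ
    simp only [Finset.mem_univ, if_true] at h2
    have h3 : (∑ e', ((x - chi e + chi g) e' : ℤ)) = (d : ℤ) := by rw [h2, hXd]; ring
    exact_mod_cast h3
  obtain ⟨T, hT⟩ : ∃ T : Finset E, ¬ (∑ e' ∈ T, (x - chi e + chi g) e' ≤ f T) := by
    by_contra hc
    push_neg at hc
    exact hnot ⟨hc, hz_sum⟩
  have hfT : (f T : ℤ) < (∑ e' ∈ T, (x e' : ℤ))
      - (if e ∈ T then 1 else 0) + (if g ∈ T then 1 else 0) := by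
    have h1 : (f T : ℤ) < ∑ e' ∈ T, ((x - chi e + chi g) e' : ℤ) := by
      have := not_le.mp hT
      exact_mod_cast this
    rwa [sum_adj_int x e g hxe T] at h1
  obtain ⟨hgT, heT, hTt⟩ : g ∈ T ∧ e ∉ T ∧ (∑ e' ∈ T, (x e' : ℤ)) = (f T : ℤ) := by
    have h2 := hXle T
    by_cases hg' : g ∈ T <;> by_cases he' : e ∈ T <;>
      simp only [hg', he', if_true, if_false] at hfT
    · exact absurd hfT (by omega)
    · exact ⟨hg', he', by omega⟩
    · exact absurd hfT (by omega)
    · exact absurd hfT (by omega)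
  -- uncrossing claims
  have claim1 : ∀ U : Finset E, gstar ∈ U → e ∉ U →
      (∑ e' ∈ U, (x e' : ℤ)) + 1 ≤ (f U : ℤ) := by
    intro U hgU heU
    by_contra hcon
    have hUt : (∑ e' ∈ U, (x e' : ℤ)) = (f U : ℤ) := by have := hXle U; omega
    have hW := hadd U T
    have hsubi : (f (U ∪ T) : ℤ) + (f (U ∩ T) : ℤ) ≤ (f U : ℤ) + (f T : ℤ) := by
      exact_mod_cast hsub U T
    have h1 := hXle (U ∪ T)
    have h2 := hXle (U ∩ T)
    have hWt : (∑ e' ∈ U ∪ T, (x e' : ℤ)) = (f (U ∪ T) : ℤ) := by omega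
    have hkey := hY'le (U ∪ T)
    have hmem1 : gstar ∈ U ∪ T := Finset.mem_union_left _ hgU
    have hmem2 : g ∈ U ∪ T := Finset.mem_union_right _ hgT
    have hmem3 : e ∉ U ∪ T := by simp [Finset.mem_union, heU, heT]
    rw [if_pos hmem1, if_pos hmem2, if_neg hmem3] at hkey
    have hite : (if estar ∈ U ∪ T then (1:ℤ) else 0) ≤ 1 := by split <;> omega
    omega
  have claim2 : ∀ U : Finset E, g ∈ U → estar ∉ U →
      (∑ e' ∈ U, (x e' : ℤ)) + 1 ≤ (f U : ℤ) := by
    intro U hgU hesU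
    by_contra hcon
    have hUt : (∑ e' ∈ U, (x e' : ℤ)) = (f U : ℤ) := by have := hXle U; omega
    by_cases heU : e ∈ U
    · have hW := hadd U T
      have hsubi : (f (U ∪ T) : ℤ) + (f (U ∩ T) : ℤ) ≤ (f U : ℤ) + (f T : ℤ) := by
        exact_mod_cast hsub U T
      have h1 := hXle (U ∪ T)
      have h2 := hXle (U ∩ T)
      have hVt : (∑ e' ∈ U ∩ T, (x e' : ℤ)) = (f (U ∩ T) : ℤ) := by omega
      have hkey := hY'le (U ∩ T)
      have hm1 : estar ∉ U ∩ T := fun h => hesU (Finset.mem_inter.mp h).1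
      have hm2 : e ∉ U ∩ T := fun h => heT (Finset.mem_inter.mp h).2
      have hm3 : g ∈ U ∩ T := Finset.mem_inter.mpr ⟨hgU, hgT⟩
      rw [if_neg hm1, if_neg hm2, if_pos hm3] at hkey
      have hite : (0:ℤ) ≤ (if gstar ∈ U ∩ T then (1:ℤ) else 0) := by split <;> omega
      omega
    · have hkey := hY'le U
      rw [if_neg hesU, if_neg heU, if_pos hgU] at hkey
      have hite : (0:ℤ) ≤ (if gstar ∈ U then (1:ℤ) else 0) := by split <;> omega
      omega
  constructor
  · refine ⟨fun U => ?_, ?_⟩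
    · have hs := sum_adj_int x e gstar hxe U
      have hz : (∑ e' ∈ U, ((x - chi e + chi gstar) e' : ℤ)) ≤ (f U : ℤ) := by
        rw [hs]
        by_cases hgU : gstar ∈ U <;> by_cases heU : e ∈ U <;>
          simp only [hgU, heU, if_true, if_false]
        · have := hXle U; omega
        · have := claim1 U hgU heU; omega
        · have := hXle U; omega
        · have := hXle U; omega
      exact_mod_cast hz
    · have h2 := sum_adj_int x e gstar hxe Finset.univ
      simp only [Finset.mem_univ, if_true] at h2
      have h3 : (∑ e', ((x - chi e + chi gstar) e' : ℤ)) = (d : ℤ) := by rw [h2, hXd]; ring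
      exact_mod_cast h3
  · refine ⟨fun U => ?_, ?_⟩
    · have hs := sum_adj_int x estar g hxe1 U
      have hz : (∑ e' ∈ U, ((x - chi estar + chi g) e' : ℤ)) ≤ (f U : ℤ) := by
        rw [hs]
        by_cases hgU : g ∈ U <;> by_cases heU : estar ∈ U <;>
          simp only [hgU, heU, if_true, if_false]
        · have := hXle U; omega
        · have := claim2 U hgU heU; omega
        · have := hXle U; omega
        · have := hXle U; omega
      exact_mod_cast hz
    · have h2 := sum_adj_int x estar g hxe1 Finset.univ
      simp only [Finset.mem_univ, if_true] at h2
      have h3 : (∑ e', ((x - chi estar + chi g) e' : ℤ)) = (d : ℤ) := by rw [h2, hXd]; ring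
      exact_mod_cast h3
end

section
/- Let f : 2^E → ℕ be an integral polymatroid rank function and d ∈ ℕ. Let x ∈ B_f(d), let e*, g* ∈ E be distinct with y := x − χ_{e*} + χ_{g*} ∈ B_f(d). Then D_{e*}(y) ⊆ D_{e*}(x); that is, for every g ∈ E∖{e*}, if y + χ_g − χ_{e*} ∈ B_f(d) then x + χ_g − χ_{e*} ∈ B_f(d). -/
open Finset

lemma chi_sum {E : Type*} [DecidableEq E] (a : E) (U : Finset E) :
    ∑ e ∈ U, chi a e = if a ∈ U then 1 else 0 := by
  simp [chi]

lemma sum_subadd {E : Type*} [DecidableEq E] (u : E → ℕ) (a b : E)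
    (h : ∀ e, chi a e ≤ u e) (U : Finset E) :
    ∑ e ∈ U, (u - chi a + chi b) e
      = ∑ e ∈ U, u e + (if b ∈ U then 1 else 0) - (if a ∈ U then 1 else 0) := by
  have h1 : ∑ e ∈ U, (u e - chi a e) = ∑ e ∈ U, u e - ∑ e ∈ U, chi a e :=
    Finset.sum_tsub_distrib U (fun e _ => h e)
  have h2 : ∑ e ∈ U, chi a e ≤ ∑ e ∈ U, u e := Finset.sum_le_sum (fun e _ => h e)
  have h3 : ∑ e ∈ U, (u - chi a + chi b) e
      = ∑ e ∈ U, (u e - chi a e) + ∑ e ∈ U, chi b e := by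
    rw [← Finset.sum_add_distrib]; rfl
  rw [h3, h1, chi_sum, chi_sum] at *
  omega

lemma sum_addsub {E : Type*} [DecidableEq E] (u : E → ℕ) (a b : E)
    (h : ∀ e, chi a e ≤ u e + chi b e) (U : Finset E) :
    ∑ e ∈ U, (u + chi b - chi a) e
      = ∑ e ∈ U, u e + (if b ∈ U then 1 else 0) - (if a ∈ U then 1 else 0) := by
  have h1 : ∑ e ∈ U, ((u e + chi b e) - chi a e)
      = ∑ e ∈ U, (u e + chi b e) - ∑ e ∈ U, chi a e :=
    Finset.sum_tsub_distrib U (fun e _ => h e)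
  have h0 : ∑ e ∈ U, (u + chi b - chi a) e = ∑ e ∈ U, ((u e + chi b e) - chi a e) := rfl
  rw [h0, h1, Finset.sum_add_distrib, chi_sum, chi_sum]

/-- Let `f` be an integral polymatroid rank function, `d ∈ ℕ`, `x ∈ B_f(d)`, and let
`e*, g* ∈ E` be distinct with `y := x - χ_{e*} + χ_{g*} ∈ B_f(d)`. Then
`D_{e*}(y) ⊆ D_{e*}(x)`: for every `g ≠ e*`, if `y + χ_g - χ_{e*} ∈ B_f(d)` then
`x + χ_g - χ_{e*} ∈ B_f(d)`. -/
theorem exchange_set_antitone {E : Type*} [Fintype E] [DecidableEq E] [Nonempty E]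
    (f : Finset E → ℕ) (hf : IsPolymatroidRank f) (d : ℕ)
    (x : E → ℕ) (hx : x ∈ Base f d)
    (estar gstar : E) (hne : estar ≠ gstar)
    (hy : x - chi estar + chi gstar ∈ Base f d) :
    ∀ g : E, g ≠ estar →
      (x - chi estar + chi gstar) + chi g - chi estar ∈ Base f d →
      x + chi g - chi estar ∈ Base f d := by
  intro g hg hz
  obtain ⟨hxc, hxs⟩ := hx
  obtain ⟨hyc, hys⟩ := hy
  obtain ⟨hzc, hzs⟩ := hz
  -- chi gstar estar = 0, chi g estar = 0
  have hcg : chi gstar estar = 0 := by simp [chi]; exact hne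
  have hcg' : chi g estar = 0 := by simp [chi]; exact fun h => hg h.symm
  -- x estar ≥ 1
  have h1 : 1 ≤ x estar := by
    by_contra h1
    have hx0 : x estar = 0 := by omega
    have heq : ∀ e, (x - chi estar + chi gstar) e = x e + chi gstar e := by
      intro e
      by_cases he : e = estar
      · subst he
        simp [Pi.add_apply, Pi.sub_apply, chi, hx0]
      · simp [Pi.add_apply, Pi.sub_apply, chi, he]
    have : ∑ e, (x - chi estar + chi gstar) e = ∑ e, x e + ∑ e, chi gstar e := by
      rw [← Finset.sum_add_distrib]
      exact Finset.sum_congr rfl (fun e _ => heq e)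
    rw [chi_sum, if_pos (Finset.mem_univ gstar)] at this
    omega
  -- x estar ≥ 2
  have h2 : 2 ≤ x estar := by
    by_contra h2
    have hx1 : x estar = 1 := by omega
    set y := x - chi estar + chi gstar with hydef
    have hy0 : y estar = 0 := by
      simp [hydef, Pi.add_apply, Pi.sub_apply, chi, hx1, hcg]
      exact hne
    have heq : ∀ e, ((y + chi g) - chi estar) e = y e + chi g e := by
      intro e
      by_cases he : e = estar
      · subst he
        simp [Pi.sub_apply, Pi.add_apply, chi, hy0, hcg', Ne.symm hg]
      · simp [Pi.sub_apply, Pi.add_apply, chi, he]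
    have hsy : ∑ e, y e = d := hys
    have : ∑ e, (y + chi g - chi estar) e = ∑ e, y e + ∑ e, chi g e := by
      rw [← Finset.sum_add_distrib]
      exact Finset.sum_congr rfl (fun e _ => heq e)
    rw [chi_sum, if_pos (Finset.mem_univ g)] at this
    omega
  -- pointwise bounds
  have hax : ∀ e, chi estar e ≤ x e := by
    intro e; by_cases he : e = estar
    · subst he; simpa [chi] using h1
    · simp [chi, he]
  have hay : ∀ e, chi estar e ≤ (x - chi estar + chi gstar) e + chi g e := by
    intro e; by_cases he : e = estar
    · subst he
      simp [Pi.add_apply, Pi.sub_apply, chi, hcg, hcg']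
      omega
    · simp [chi, he]
  have haw : ∀ e, chi estar e ≤ x e + chi g e := by
    intro e; exact le_trans (hax e) (Nat.le_add_right _ _)
  constructor
  · intro U
    have hxU := hxc U
    have hzU := hzc U
    rw [sum_addsub _ _ _ hay U, sum_subadd _ _ _ hax U] at hzU
    rw [sum_addsub _ _ _ haw U]
    have hE : (if estar ∈ U then 1 else 0 : ℕ) ≤ 1 := by split <;> omega
    have hG : (if gstar ∈ U then 1 else 0 : ℕ) ≤ 1 := by split <;> omega
    have hg1 : (if g ∈ U then 1 else 0 : ℕ) ≤ 1 := by split <;> omega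
    omega
  · rw [sum_addsub _ _ _ haw Finset.univ]
    simp [hxs]
end
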